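/- arXiv:1804.11189 — 8 statements merged into one kernel-verified Lean document; each statement's English description precedes it below -/
import Mathlib

section
/- For every odd integer n ≥ 3, there exists a 3-diagonal magic square of order n: an n × n array containing each of 0,...,3n−1 exactly once, with exactly 3 filled cells in each row and each column, all filled cells lying on 3 consecutive (broken) diagonals, and every row sum and column sum equal to 3(3n−1)/2. -/
/-- An `n × n` partially filled array with entries `0,…,k*n-1` each occurring exactly once,
exactly `k` filled cells in each row and each column, and every row sum and column sum
equal to `S`. -/
def IsMagicWithSum (n k S : ℕ) (M : Fin n → Fin n → Option ℕ) : Prop :=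
  (∀ e < k * n, ∃! p : Fin n × Fin n, M p.1 p.2 = some e) ∧
  (∀ i j : Fin n, ∀ e, M i j = some e → e < k * n) ∧
  (∀ i : Fin n, (Finset.univ.filter fun j => (M i j).isSome).card = k) ∧
  (∀ j : Fin n, (Finset.univ.filter fun i => (M i j).isSome).card = k) ∧
  (∀ i : Fin n, ∑ j, (M i j).getD 0 = S) ∧
  (∀ j : Fin n, ∑ i, (M i j).getD 0 = S)

/-- A `k`-magic square of order `n`: some common magic sum works. -/
def IsKMagic (n k : ℕ) (M : Fin n → Fin n → Option ℕ) : Prop :=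
  ∃ S, IsMagicWithSum n k S M

/-- All filled cells lie on `k` consecutive broken diagonals, i.e. there is a shift `d`
such that every filled cell `(i, j)` satisfies `j = (i + d + t) % n` for some `t < k`. -/
def IsKDiagonal (n k : ℕ) (M : Fin n → Fin n → Option ℕ) : Prop :=
  ∃ d : ℕ, ∀ i j : Fin n, (M i j).isSome → ∃ t < k, (j : ℕ) = ((i : ℕ) + d + t) % n

/-- A `k`-diagonal magic square of order `n`. -/
def IsDiagonalMagic (n k : ℕ) (M : Fin n → Fin n → Option ℕ) : Prop :=
  IsKMagic n k M ∧ IsKDiagonal n k M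



lemma modsmall {n k : ℕ} (h : k < 2*n) :
    k % n = if k < n then k else k - n := by
  split
  · exact Nat.mod_eq_of_lt ‹_›
  · rw [Nat.mod_eq_sub_mod (by omega), Nat.mod_eq_of_lt (by omega)]

lemma modd {m s : ℕ} (hs : s ≤ m) : m*(2*s+1) % (2*m+1) = m - s := by
  have key : m*(2*s+1) = (2*m+1) * s + (m - s) := by zify [hs]; ring
  rw [key, Nat.mul_add_mod, Nat.mod_eq_of_lt (by omega)]

lemma mode {m s : ℕ} (h1 : 1 ≤ s) (h2 : s ≤ 2*m) : m*(2*s) % (2*m+1) = 2*m+1-s := by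
  have key : m*(2*s) = (2*m+1) * (s-1) + (2*m+1-s) := by
    zify [h1, h2, (by omega : s ≤ 2*m+1)]; ring
  rw [key, Nat.mul_add_mod, Nat.mod_eq_of_lt (by omega)]

lemma cop (m : ℕ) : (2*m+1).gcd m = 1 := by
  have := Nat.gcd_add_mul_right_right m 1 2
  rw [Nat.gcd_comm]
  simpa [Nat.add_comm, Nat.mul_comm] using this

lemma minv {m : ℕ} (hm : 1 ≤ m) : m*(2*m-1) % (2*m+1) = 1 := by
  have key : m*(2*m-1) = (2*m+1) * (m-1) + 1 := by zify [hm, (by omega : 1 ≤ 2*m)]; ring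
  rw [key, Nat.mul_add_mod, Nat.mod_eq_of_lt (by omega)]

lemma minj {m x y c : ℕ} (hx : x + c ≤ 2*(2*m+1)) (hy : y + c ≤ 2*(2*m+1))
    (h : m*(x+c) % (2*m+1) = m*(y+c) % (2*m+1)) : x % (2*m+1) = y % (2*m+1) := by
  have h2 : x + c ≡ y + c [MOD 2*m+1] :=
    Nat.ModEq.cancel_left_of_coprime (cop m) h
  have h3 : x ≡ y [MOD 2*m+1] := Nat.ModEq.add_right_cancel' c h2
  exact h3

lemma msurj {m q c : ℕ} (hm : 1 ≤ m) (hq : q < 2*m+1) (hc : c ≤ 2*m+1) :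
    m * ((q*(2*m-1) + (2*m+1-c)) % (2*m+1) + c) % (2*m+1) = q := by
  set n := 2*m+1 with hn
  have h1 : (q*(2*m-1) + (n-c)) % n + c ≡ q*(2*m-1) + (n-c) + c [MOD n] :=
    Nat.ModEq.add_right c (Nat.mod_modEq _ _)
  have h2 : q*(2*m-1) + (n-c) + c = q*(2*m-1) + n := by omega
  have h3 : q*(2*m-1) + n ≡ q*(2*m-1) [MOD n] := by
    simpa using (Nat.ModEq.refl (q*(2*m-1))).add (Nat.modEq_zero_iff_dvd.mpr dvd_rfl)
  have h4 : (q*(2*m-1) + (n-c)) % n + c ≡ q*(2*m-1) [MOD n] := by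
    rw [h2] at h1; exact h1.trans h3
  have h5 : m * ((q*(2*m-1) + (n-c)) % n + c) ≡ m * (q*(2*m-1)) [MOD n] := h4.mul_left m
  have h6 : m * (q*(2*m-1)) = q * (m*(2*m-1)) := by ring
  have h7 : q * (m*(2*m-1)) ≡ q * 1 [MOD n] := Nat.ModEq.mul_left q (by
    show m*(2*m-1) % n = 1 % n
    rw [minv hm, Nat.mod_eq_of_lt (by omega)])
  have h8 : m * ((q*(2*m-1) + (n-c)) % n + c) ≡ q [MOD n] := by
    rw [h6] at h5
    simpa using h5.trans h7
  have h9 : m * ((q*(2*m-1) + (n-c)) % n + c) % n = q % n := h8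
  rwa [Nat.mod_eq_of_lt hq] at h9

lemma rowid {m i : ℕ} (hm : 1 ≤ m) (hi : i < 2*m+1) :
    m*(i+1) % (2*m+1) + i + m*(i+2) % (2*m+1) = 3*m := by
  rcases Nat.even_or_odd i with ⟨s, rfl⟩ | ⟨s, rfl⟩
  · rcases eq_or_lt_of_le (by omega : s ≤ m) with hms | hs
    · have e1 : m*(s+s+1) % (2*m+1) = 0 := by
        have h : s+s+1 = 2*m+1 := by omega
        rw [h]
        have h2 : m*(2*m+1) = (2*m+1)*m := by ring
        rw [h2, Nat.mul_mod_right]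
      have e2 : m*(s+s+2) % (2*m+1) = 2*m+1-(s+1) := by
        have h : s+s+2 = 2*(s+1) := by ring
        rw [h, mode (by omega) (by omega)]
      omega
    · have e1 : m*(s+s+1) % (2*m+1) = m - s := by
        have h : s+s+1 = 2*s+1 := by ring
        rw [h, modd (by omega)]
      have e2 : m*(s+s+2) % (2*m+1) = 2*m+1-(s+1) := by
        have h : s+s+2 = 2*(s+1) := by ring
        rw [h, mode (by omega) (by omega)]
      omega
  · have e1 : m*(2*s+1+1) % (2*m+1) = 2*m+1-(s+1) := by
      have h : 2*s+1+1 = 2*(s+1) := by ring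
      rw [h, mode (by omega) (by omega)]
    have e2 : m*(2*s+1+2) % (2*m+1) = m - (s+1) := by
      have h : 2*s+1+2 = 2*(s+1)+1 := by ring
      rw [h, modd (by omega)]
    omega

lemma colid {m j : ℕ} (hm : 1 ≤ m) (hj : j < 2*m+1) :
    m*(j+1) % (2*m+1) + (j+(2*m+1)-1) % (2*m+1) + m*j % (2*m+1) = 3*m := by
  rcases Nat.eq_zero_or_pos j with rfl | hj1
  · have e1 : m*(0+1) % (2*m+1) = m := by
      have h : m*(0+1) = m := by ring
      rw [h, Nat.mod_eq_of_lt (by omega)]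
    have e2 : m*0 % (2*m+1) = 0 := by simp
    have e3 : (0+(2*m+1)-1) % (2*m+1) = 2*m := by
      rw [modsmall (by omega), if_pos (by omega)]; omega
    omega
  · have hb : (j+(2*m+1)-1) % (2*m+1) = j - 1 := by
      rw [modsmall (by omega)]
      have h : ¬ (j+(2*m+1)-1 < 2*m+1) := by omega
      rw [if_neg h]
      omega
    rcases Nat.even_or_odd j with ⟨s, rfl⟩ | ⟨s, rfl⟩
    · have e1 : m*(s+s+1) % (2*m+1) = m - s := by
        have h : s+s+1 = 2*s+1 := by ring
        rw [h, modd (by omega)]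
      have e2 : m*(s+s) % (2*m+1) = 2*m+1-s := by
        have h : s+s = 2*s := by ring
        rw [h, mode (by omega) (by omega)]
      omega
    · have e1 : m*(2*s+1+1) % (2*m+1) = 2*m+1-(s+1) := by
        have h : 2*s+1+1 = 2*(s+1) := by ring
        rw [h, mode (by omega) (by omega)]
      have e2 : m*(2*s+1) % (2*m+1) = m - s := modd (by omega)
      omega



def mkM (n m : ℕ) : Fin n → Fin n → Option ℕ := fun i j =>
  if (j:ℕ) = ((i:ℕ)+1) % n then some (3*(i:ℕ)+1)
  else if (j:ℕ) = ((i:ℕ)+2) % n then some (3*(m*((i:ℕ)+2)%n)+2)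
  else if (j:ℕ) = (i:ℕ) then some (3*(m*((i:ℕ)+1)%n))
  else none

lemma inv1 {n i j : ℕ} (hn : 0 < n) (hi : i < n) (hj : j < n) :
    j = (i+1) % n ↔ i = (j+n-1) % n := by
  rw [modsmall (by omega), modsmall (by omega)]
  split_ifs <;> omega

lemma inv2 {n i j : ℕ} (hn : 2 ≤ n) (hi : i < n) (hj : j < n) :
    j = (i+2) % n ↔ i = (j+n-2) % n := by
  rw [modsmall (by omega), modsmall (by omega)]
  split_ifs <;> omega

theorem three_diagonal_magic_square (n : ℕ) (hn : 3 ≤ n) (hno : Odd n) :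
    ∃ M : Fin n → Fin n → Option ℕ,
      IsMagicWithSum n 3 (3 * (3 * n - 1) / 2) M ∧ IsKDiagonal n 3 M := by
  obtain ⟨m, hnm⟩ := hno
  have hm : 1 ≤ m := by omega
  subst hnm
  set n := 2*m+1 with hndef
  have hn0 : 0 < n := by omega
  have hn3 : 3 ≤ n := by omega
  refine ⟨mkM n m, ⟨?_, ?_, ?_, ?_, ?_, ?_⟩, ?_⟩
  · -- each e < 3n appears exactly once
    intro e he
    have hq : e / 3 < n := by omega
    set q := e / 3 with hqdef
    rcases (by omega : e % 3 = 0 ∨ e % 3 = 1 ∨ e % 3 = 2) with h3 | h3 | h3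
    · -- diagonal t = 0
      set i0 : ℕ := (q*(2*m-1) + (2*m+1-1)) % n with hi0
      have hi0n : i0 < n := Nat.mod_lt _ hn0
      have hval : m * (i0 + 1) % n = q := msurj hm (by omega) (by omega)
      have hne1 : ¬ (i0 = (i0+1) % n) := by
        rw [modsmall (by omega)]; split_ifs <;> omega
      have hne2 : ¬ (i0 = (i0+2) % n) := by
        rw [modsmall (by omega)]; split_ifs <;> omega
      refine ⟨(⟨i0, hi0n⟩, ⟨i0, hi0n⟩), ?_, ?_⟩
      · show mkM n m _ _ = _
        unfold mkM
        rw [if_neg hne1, if_neg hne2, if_pos rfl, hval]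
        congr 1
        omega
      · rintro ⟨i, j⟩ h
        have hi := i.isLt
        have hj := j.isLt
        unfold mkM at h
        split_ifs at h with h1 h2 hj3 <;>
          simp only [Option.some.injEq] at h
        · omega
        · omega
        · have hq2 : m * ((i:ℕ) + 1) % n = q := by omega
          have : (i:ℕ) % n = i0 % n :=
            minj (c := 1) (by omega) (by omega) (by rw [hq2, hval])
          rw [Nat.mod_eq_of_lt hi, Nat.mod_eq_of_lt hi0n] at this
          refine Prod.ext (Fin.ext this) (Fin.ext ?_)
          rw [hj3, this]
    · -- diagonal t = 1
      refine ⟨(⟨q, hq⟩, ⟨(q+1) % n, Nat.mod_lt _ hn0⟩), ?_, ?_⟩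
      · show mkM n m _ _ = _
        unfold mkM
        rw [if_pos rfl]
        show (some (3*q+1) : Option ℕ) = some e
        congr 1
        omega
      · rintro ⟨i, j⟩ h
        have hi := i.isLt
        have hj := j.isLt
        unfold mkM at h
        split_ifs at h with h1 h2 hj3 <;>
          simp only [Option.some.injEq] at h
        · have hiq : (i:ℕ) = q := by omega
          refine Prod.ext (Fin.ext hiq) (Fin.ext ?_)
          rw [h1, hiq]
        · omega
        · omega
    · -- diagonal t = 2
      set i0 : ℕ := (q*(2*m-1) + (2*m+1-2)) % n with hi0
      have hi0n : i0 < n := Nat.mod_lt _ hn0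
      have hval : m * (i0 + 2) % n = q := msurj hm (by omega) (by omega)
      have hne1 : ¬ ((i0+2) % n = (i0+1) % n) := by
        rw [modsmall (by omega), modsmall (by omega)]; split_ifs <;> omega
      refine ⟨(⟨i0, hi0n⟩, ⟨(i0+2) % n, Nat.mod_lt _ hn0⟩), ?_, ?_⟩
      · show mkM n m _ _ = _
        unfold mkM
        rw [if_neg hne1, if_pos rfl, hval]
        congr 1
        omega
      · rintro ⟨i, j⟩ h
        have hi := i.isLt
        have hj := j.isLt
        unfold mkM at h
        split_ifs at h with h1 h2 hj3 <;>
          simp only [Option.some.injEq] at h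
        · omega
        · have hq2 : m * ((i:ℕ) + 2) % n = q := by omega
          have : (i:ℕ) % n = i0 % n :=
            minj (c := 2) (by omega) (by omega) (by rw [hq2, hval])
          rw [Nat.mod_eq_of_lt hi, Nat.mod_eq_of_lt hi0n] at this
          refine Prod.ext (Fin.ext this) (Fin.ext ?_)
          rw [h2, this]
        · omega
  · -- entries bounded
    intro i j e h
    have hi := i.isLt
    have b1 := Nat.mod_lt (m*((i:ℕ)+2)) hn0
    have b2 := Nat.mod_lt (m*((i:ℕ)+1)) hn0
    unfold mkM at h
    split_ifs at h with h1 h2 h3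
    · simp only [Option.some.injEq] at h; omega
    · simp only [Option.some.injEq] at h; omega
    · simp only [Option.some.injEq] at h; omega
  · -- row counts
    intro i
    have hi := i.isLt
    have hd12 : ((i:ℕ)+1) % n ≠ ((i:ℕ)+2) % n := by
      rw [modsmall (by omega), modsmall (by omega)]; split_ifs <;> omega
    have hd1i : ((i:ℕ)+1) % n ≠ (i:ℕ) := by
      rw [modsmall (by omega)]; split_ifs <;> omega
    have hd2i : ((i:ℕ)+2) % n ≠ (i:ℕ) := by
      rw [modsmall (by omega)]; split_ifs <;> omega
    have hfil : (Finset.univ.filter fun j => (mkM n m i j).isSome)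
        = {⟨((i:ℕ)+1) % n, Nat.mod_lt _ hn0⟩, ⟨((i:ℕ)+2) % n, Nat.mod_lt _ hn0⟩, i} := by
      ext j
      simp only [Finset.mem_filter, Finset.mem_univ, true_and, Finset.mem_insert,
        Finset.mem_singleton, Fin.ext_iff]
      unfold mkM
      constructor
      · intro hs
        split_ifs at hs with h1 h2 h3
        · exact Or.inl h1
        · exact Or.inr (Or.inl h2)
        · exact Or.inr (Or.inr h3)
        · simp at hs
      · rintro (hj | hj | hj)
        · rw [if_pos hj]; simp
        · rw [if_neg (by rw [hj]; exact fun h => hd12 h.symm), if_pos hj]; simp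
        · rw [if_neg (by rw [hj]; exact fun h => hd1i h.symm),
            if_neg (by rw [hj]; exact fun h => hd2i h.symm), if_pos hj]; simp
    rw [hfil, Finset.card_insert_of_notMem, Finset.card_insert_of_notMem,
      Finset.card_singleton]
    · simp only [Finset.mem_singleton, Fin.ext_iff]; exact hd2i
    · simp only [Finset.mem_insert, Finset.mem_singleton, Fin.ext_iff]
      push_neg
      exact ⟨hd12, hd1i⟩
  · -- col counts
    intro j
    have hj := j.isLt
    have hd12 : ((j:ℕ)+n-1) % n ≠ ((j:ℕ)+n-2) % n := by
      rw [modsmall (by omega), modsmall (by omega)]; split_ifs <;> omega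
    have hd1j : ((j:ℕ)+n-1) % n ≠ (j:ℕ) := by
      rw [modsmall (by omega)]; split_ifs <;> omega
    have hd2j : ((j:ℕ)+n-2) % n ≠ (j:ℕ) := by
      rw [modsmall (by omega)]; split_ifs <;> omega
    have hfil : (Finset.univ.filter fun i => (mkM n m i j).isSome)
        = {⟨((j:ℕ)+n-1) % n, Nat.mod_lt _ hn0⟩, ⟨((j:ℕ)+n-2) % n, Nat.mod_lt _ hn0⟩, j} := by
      ext i
      have hi := i.isLt
      simp only [Finset.mem_filter, Finset.mem_univ, true_and, Finset.mem_insert,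
        Finset.mem_singleton, Fin.ext_iff]
      unfold mkM
      constructor
      · intro hs
        split_ifs at hs with h1 h2 h3
        · exact Or.inl ((inv1 hn0 hi hj).mp h1)
        · exact Or.inr (Or.inl ((inv2 (by omega) hi hj).mp h2))
        · exact Or.inr (Or.inr h3.symm)
        · simp at hs
      · rintro (hij | hij | hij)
        · rw [if_pos ((inv1 hn0 hi hj).mpr hij)]; simp
        · rw [if_neg (fun h => hd12 (by rw [← (inv1 hn0 hi hj).mp h, hij])),
            if_pos ((inv2 (by omega) hi hj).mpr hij)]; simp
        · rw [if_neg (fun h => hd1j (by rw [← (inv1 hn0 hi hj).mp h, hij])),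
            if_neg (fun h => hd2j (by rw [← (inv2 (by omega) hi hj).mp h, hij])),
            if_pos hij.symm]; simp
    rw [hfil, Finset.card_insert_of_notMem, Finset.card_insert_of_notMem,
      Finset.card_singleton]
    · simp only [Finset.mem_singleton, Fin.ext_iff]; exact hd2j
    · simp only [Finset.mem_insert, Finset.mem_singleton, Fin.ext_iff]
      push_neg
      exact ⟨hd12, hd1j⟩
  · -- row sums
    intro i
    have hi := i.isLt
    have hd12 : ((i:ℕ)+1) % n ≠ ((i:ℕ)+2) % n := by
      rw [modsmall (by omega), modsmall (by omega)]; split_ifs <;> omega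
    have hd1i : ((i:ℕ)+1) % n ≠ (i:ℕ) := by
      rw [modsmall (by omega)]; split_ifs <;> omega
    have hd2i : ((i:ℕ)+2) % n ≠ (i:ℕ) := by
      rw [modsmall (by omega)]; split_ifs <;> omega
    set j1 : Fin n := ⟨((i:ℕ)+1) % n, Nat.mod_lt _ hn0⟩ with hj1
    set j2 : Fin n := ⟨((i:ℕ)+2) % n, Nat.mod_lt _ hn0⟩ with hj2
    have hsum : ∑ j, (mkM n m i j).getD 0 = ∑ j ∈ ({j1, j2, i} : Finset (Fin n)), (mkM n m i j).getD 0 := by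
      refine (Finset.sum_subset (Finset.subset_univ _) ?_).symm
      intro x _ hx
      simp only [Finset.mem_insert, Finset.mem_singleton, hj1, hj2, Fin.ext_iff] at hx
      push_neg at hx
      unfold mkM
      rw [if_neg hx.1, if_neg hx.2.1, if_neg hx.2.2]
      rfl
    rw [hsum, Finset.sum_insert (by
        simp only [Finset.mem_insert, Finset.mem_singleton, hj1, hj2, Fin.ext_iff]
        push_neg; exact ⟨hd12, hd1i⟩),
      Finset.sum_insert (by
        simp only [Finset.mem_singleton, hj2, Fin.ext_iff]; exact hd2i),
      Finset.sum_singleton]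
    have e1 : mkM n m i j1 = some (3*(i:ℕ)+1) := by
      unfold mkM; rw [if_pos rfl]
    have e2 : mkM n m i j2 = some (3*(m*((i:ℕ)+2)%n)+2) := by
      unfold mkM; rw [if_neg (fun h => hd12 h.symm), if_pos rfl]
    have e3 : mkM n m i i = some (3*(m*((i:ℕ)+1)%n)) := by
      unfold mkM; rw [if_neg (fun h => hd1i h.symm), if_neg (fun h => hd2i h.symm), if_pos rfl]
    rw [e1, e2, e3]
    simp only [Option.getD_some]
    have := rowid hm hi
    rw [← hndef] at this
    omega
  · -- col sums
    intro j
    have hj := j.isLt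
    have hd12 : ((j:ℕ)+n-1) % n ≠ ((j:ℕ)+n-2) % n := by
      rw [modsmall (by omega), modsmall (by omega)]; split_ifs <;> omega
    have hd1j : ((j:ℕ)+n-1) % n ≠ (j:ℕ) := by
      rw [modsmall (by omega)]; split_ifs <;> omega
    have hd2j : ((j:ℕ)+n-2) % n ≠ (j:ℕ) := by
      rw [modsmall (by omega)]; split_ifs <;> omega
    set r1 : Fin n := ⟨((j:ℕ)+n-1) % n, Nat.mod_lt _ hn0⟩ with hr1
    set r2 : Fin n := ⟨((j:ℕ)+n-2) % n, Nat.mod_lt _ hn0⟩ with hr2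
    have hb1 : (r1:ℕ) < n := r1.isLt
    have hb2 : (r2:ℕ) < n := r2.isLt
    have hsum : ∑ i, (mkM n m i j).getD 0 = ∑ i ∈ ({r1, r2, j} : Finset (Fin n)), (mkM n m i j).getD 0 := by
      refine (Finset.sum_subset (Finset.subset_univ _) ?_).symm
      intro x _ hx
      have hxlt := x.isLt
      simp only [Finset.mem_insert, Finset.mem_singleton, hr1, hr2, Fin.ext_iff] at hx
      push_neg at hx
      unfold mkM
      rw [if_neg (fun h => hx.1 ((inv1 hn0 hxlt hj).mp h)),
        if_neg (fun h => hx.2.1 ((inv2 (by omega) hxlt hj).mp h)),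
        if_neg (fun h => hx.2.2 h.symm)]
      rfl
    rw [hsum, Finset.sum_insert (by
        simp only [Finset.mem_insert, Finset.mem_singleton, hr1, hr2, Fin.ext_iff]
        push_neg; exact ⟨hd12, hd1j⟩),
      Finset.sum_insert (by
        simp only [Finset.mem_singleton, hr2, Fin.ext_iff]; exact hd2j),
      Finset.sum_singleton]
    have e1 : mkM n m r1 j = some (3*(((j:ℕ)+n-1)%n)+1) := by
      unfold mkM
      rw [if_pos ((inv1 hn0 hb1 hj).mpr rfl)]
    have e2 : mkM n m r2 j = some (3*(m*(((j:ℕ)+n-2)%n+2)%n)+2) := by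
      unfold mkM
      rw [if_neg (fun h => hd12 ((inv1 hn0 hb2 hj).mp h).symm),
        if_pos ((inv2 (by omega) hb2 hj).mpr rfl)]
    have e3 : mkM n m j j = some (3*(m*((j:ℕ)+1)%n)) := by
      unfold mkM
      rw [if_neg (fun h => hd1j ((inv1 hn0 hj hj).mp h).symm),
        if_neg (fun h => hd2j ((inv2 (by omega) hj hj).mp h).symm), if_pos rfl]
    rw [e1, e2, e3]
    simp only [Option.getD_some]
    have hcong : m*(((j:ℕ)+n-2)%n + 2) % n = m*(j:ℕ) % n := by
      have h1 : ((j:ℕ)+n-2)%n + 2 ≡ ((j:ℕ)+n-2) + 2 [MOD n] :=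
        Nat.ModEq.add_right 2 (Nat.mod_modEq _ _)
      have h2 : (j:ℕ)+n-2+2 = (j:ℕ)+n := by omega
      have h3 : (j:ℕ)+n ≡ (j:ℕ) [MOD n] := by
        simpa using (Nat.ModEq.refl (j:ℕ)).add (Nat.modEq_zero_iff_dvd.mpr dvd_rfl)
      exact (h1.trans (h2 ▸ h3)).mul_left m
    rw [hcong]
    have := colid hm hj
    rw [← hndef] at this
    omega
  · -- diagonality
    refine ⟨0, fun i j h => ?_⟩
    unfold mkM at h
    split_ifs at h with h1 h2 h3
    · exact ⟨1, by omega, by simpa using h1⟩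
    · exact ⟨2, by omega, by simpa using h2⟩
    · exact ⟨0, by omega, by simpa [Nat.mod_eq_of_lt i.isLt] using h3⟩
    · simp at h
end

section
/- For every integer n ≥ 4, there exists a 4-diagonal magic square of order n: an n × n array containing each of 0,...,4n−1 exactly once, with exactly 4 filled cells in each row and each column, all filled cells lying on 4 consecutive broken diagonals, and every row and column sum equal to 2(4n−1) = 8n−2. -/
/-!
Fill the cells `(i, i + t)`, `t < 4`, of four consecutive broken diagonals. Diagonal `t` gets
the block of values `[n β(t), n β(t) + n)` with `β = (0, 2, 1, 3)`, placed in row `i` according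
to `i`, `rev i`, `rev (i + 2)`, `i + 2` respectively, where `rev x = n - 1 - x`. Every row then
carries two complementary pairs `x, rev x`, and so does every column, whose cells (rows `j`,
`j - 1`, `j - 2`, `j - 3`) carry `j, rev (j - 1), rev j, j - 1`. Hence all line sums equal
`2 (n - 1) + (0 + 2 + 1 + 3) n = 8 n - 2`.
-/

open Finset

theorem sum_getD_eq_sum_filter_isSome {α : Type*} (s : Finset α) (g : α → Option ℕ) :
    ∑ a ∈ s, (g a).getD 0 = ∑ a ∈ s with (g a).isSome, (g a).getD 0 := by
  refine (sum_filter_of_ne fun a _ ha => ?_).symm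
  cases h : g a <;> simp_all

section DiagonalSquare

variable {n k : ℕ} [NeZero n]

def diagonalSquare (e : Fin k × Fin n ≃ Fin (k * n)) (i j : Fin n) : Option ℕ :=
  if h : (j - i).val < k then some (e (⟨(j - i).val, h⟩, i)) else none

variable (e : Fin k × Fin n ≃ Fin (k * n))

theorem diagonalSquare_add_castLE (hk : k ≤ n) (i : Fin n) (t : Fin k) :
    diagonalSquare e i (i + Fin.castLE hk t) = some (e (t, i) : ℕ) := by
  have hsub : (i + Fin.castLE hk t - i).val = t.val := by simp
  rw [diagonalSquare, dif_pos (hsub ▸ t.isLt)]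
  simp only [hsub]

theorem diagonalSquare_eq_some_iff (hk : k ≤ n) {i j : Fin n} {x : ℕ} :
    diagonalSquare e i j = some x ↔
      ∃ t : Fin k, i + Fin.castLE hk t = j ∧ (e (t, i) : ℕ) = x := by
  constructor
  · intro h
    unfold diagonalSquare at h
    split_ifs at h with hlt
    have hcast : Fin.castLE hk ⟨_, hlt⟩ = j - i := rfl
    exact ⟨⟨_, hlt⟩, by rw [hcast, add_sub_cancel], Option.some.inj h⟩
  · rintro ⟨t, rfl, rfl⟩
    exact diagonalSquare_add_castLE e hk i t

theorem diagonalSquare_isSome_iff (hk : k ≤ n) {i j : Fin n} :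
    (diagonalSquare e i j).isSome ↔ ∃ t : Fin k, i + Fin.castLE hk t = j := by
  simp [Option.isSome_iff_exists, diagonalSquare_eq_some_iff e hk]

theorem filter_isSome_diagonalSquare_row (hk : k ≤ n) (i : Fin n) :
    univ.filter (fun j => (diagonalSquare e i j).isSome) =
      univ.map ((Fin.castLEEmb hk).trans (addLeftEmbedding i)) := by
  ext j
  simp [diagonalSquare_isSome_iff e hk]

theorem filter_isSome_diagonalSquare_col (hk : k ≤ n) (j : Fin n) :
    univ.filter (fun i => (diagonalSquare e i j).isSome) =
      univ.map ((Fin.castLEEmb hk).trans (Equiv.subLeft j).toEmbedding) := by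
  ext i
  simp [diagonalSquare_isSome_iff e hk, eq_sub_iff_add_eq, eq_comm]

theorem sum_diagonalSquare_row (hk : k ≤ n) (i : Fin n) :
    ∑ j, (diagonalSquare e i j).getD 0 = ∑ t, (e (t, i) : ℕ) := by
  rw [sum_getD_eq_sum_filter_isSome, filter_isSome_diagonalSquare_row e hk, sum_map]
  simp [diagonalSquare_add_castLE e hk]

theorem sum_diagonalSquare_col (hk : k ≤ n) (j : Fin n) :
    ∑ i, (diagonalSquare e i j).getD 0 = ∑ t, (e (t, j - Fin.castLE hk t) : ℕ) := by
  rw [sum_getD_eq_sum_filter_isSome, filter_isSome_diagonalSquare_col e hk, sum_map]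
  refine sum_congr rfl fun t _ => ?_
  have h := diagonalSquare_add_castLE e hk (j - Fin.castLE hk t) t
  rw [sub_add_cancel] at h
  simp [h]

theorem existsUnique_diagonalSquare_eq_some (hk : k ≤ n) (x : Fin (k * n)) :
    ∃! p : Fin n × Fin n, diagonalSquare e p.1 p.2 = some (x : ℕ) := by
  set q := e.symm x
  have hq : ∀ p : Fin n × Fin n,
      diagonalSquare e p.1 p.2 = some (x : ℕ) ↔ p = (q.2, q.2 + Fin.castLE hk q.1) := by
    rintro ⟨i, j⟩
    rw [diagonalSquare_eq_some_iff e hk]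
    dsimp only
    constructor
    · rintro ⟨t, rfl, hx⟩
      have : q = (t, i) := e.symm_apply_eq.2 (Fin.ext hx.symm)
      simp [this]
    · rintro ⟨⟩
      exact ⟨q.1, rfl, by simp [q]⟩
  exact ⟨_, (hq _).2 rfl, fun p hp => (hq p).1 hp⟩

theorem isMagicWithSum_diagonalSquare (hk : k ≤ n) {S : ℕ}
    (hrow : ∀ i, ∑ t, (e (t, i) : ℕ) = S)
    (hcol : ∀ j, ∑ t, (e (t, j - Fin.castLE hk t) : ℕ) = S) :
    IsMagicWithSum n k S (diagonalSquare e) := by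
  refine ⟨fun x hx => existsUnique_diagonalSquare_eq_some e hk ⟨x, hx⟩, fun i j x h => ?_,
    fun i => ?_, fun j => ?_, fun i => (sum_diagonalSquare_row e hk i).trans (hrow i),
    fun j => (sum_diagonalSquare_col e hk j).trans (hcol j)⟩
  · obtain ⟨t, -, rfl⟩ := (diagonalSquare_eq_some_iff e hk).1 h
    exact (e (t, i)).isLt
  · simp [filter_isSome_diagonalSquare_row e hk]
  · simp [filter_isSome_diagonalSquare_col e hk]

theorem isKDiagonal_diagonalSquare : IsKDiagonal n k (diagonalSquare e) := by
  refine ⟨0, fun i j h => ⟨(j - i).val, ?_, ?_⟩⟩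
  · unfold diagonalSquare at h
    split_ifs at h with hlt
    exacts [hlt, absurd h (by simp)]
  · rw [add_zero, ← Fin.val_add, add_sub_cancel]

end DiagonalSquare

def fourDiagonalEquiv (n : ℕ) [NeZero n] : Fin 4 × Fin n ≃ Fin (4 * n) :=
  (Equiv.prodShear (Equiv.swap 1 2)
    ![Equiv.refl _, Fin.revPerm, (Equiv.addRight 2).trans Fin.revPerm, Equiv.addRight 2]).trans
    finProdFinEquiv

section FourDiagonal

variable {n : ℕ} [NeZero n] (i : Fin n)

theorem fourDiagonalEquiv_zero : (fourDiagonalEquiv n (0, i) : ℕ) = i := by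
  simp [fourDiagonalEquiv, Equiv.prodShear, Equiv.swap_apply_of_ne_of_ne]

theorem fourDiagonalEquiv_one : (fourDiagonalEquiv n (1, i) : ℕ) = Fin.rev i + 2 * n := by
  simp [fourDiagonalEquiv, Equiv.prodShear, mul_comm]

theorem fourDiagonalEquiv_two : (fourDiagonalEquiv n (2, i) : ℕ) = Fin.rev (i + 2) + n := by
  simp [fourDiagonalEquiv, Equiv.prodShear]

theorem fourDiagonalEquiv_three : (fourDiagonalEquiv n (3, i) : ℕ) = (i + 2 : Fin n) + 3 * n := by
  simp [fourDiagonalEquiv, Equiv.prodShear, Equiv.swap_apply_of_ne_of_ne, mul_comm]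

theorem sum_fourDiagonalEquiv_row : ∑ t, (fourDiagonalEquiv n (t, i) : ℕ) = 8 * n - 2 := by
  have := (i + 2).isLt
  simp only [Fin.sum_univ_four, fourDiagonalEquiv_zero, fourDiagonalEquiv_one,
    fourDiagonalEquiv_two, fourDiagonalEquiv_three, Fin.val_rev]
  omega

theorem sum_fourDiagonalEquiv_col (hn : 4 ≤ n) (j : Fin n) :
    ∑ t, (fourDiagonalEquiv n (t, j - Fin.castLE hn t) : ℕ) = 8 * n - 2 := by
  have h0 : Fin.castLE hn 0 = 0 := Fin.ext (by simp)
  have h1 : Fin.castLE hn 1 = 1 := Fin.ext (by simpa using (Nat.mod_eq_of_lt (by omega)).symm)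
  have h2 : Fin.castLE hn 2 = 2 := Fin.ext (by simpa using (Nat.mod_eq_of_lt (by omega)).symm)
  have h3 : Fin.castLE hn 3 = 3 := Fin.ext (by simpa using (Nat.mod_eq_of_lt (by omega)).symm)
  have hshift : j - 3 + 2 = j - 1 := by open Fin.CommRing in ring
  have := (j - 1).isLt
  simp only [Fin.sum_univ_four, h0, h1, h2, h3, sub_zero, sub_add_cancel, hshift,
    fourDiagonalEquiv_zero, fourDiagonalEquiv_one, fourDiagonalEquiv_two, fourDiagonalEquiv_three,
    Fin.val_rev]
  omega

end FourDiagonal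

theorem four_diagonal_magic_square (n : ℕ) (hn : 4 ≤ n) :
    ∃ M : Fin n → Fin n → Option ℕ,
      IsMagicWithSum n 4 (8 * n - 2) M ∧ IsKDiagonal n 4 M := by
  have : NeZero n := ⟨by omega⟩
  exact ⟨diagonalSquare (fourDiagonalEquiv n),
    isMagicWithSum_diagonalSquare _ hn sum_fourDiagonalEquiv_row (sum_fourDiagonalEquiv_col hn),
    isKDiagonal_diagonalSquare _⟩
end

section
/- For every odd integer n ≥ 5, there exists a 5-diagonal magic square of order n with magic sum 5(5n−1)/2. -/
namespace FiveDiag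

theorem modv (n a : ℕ) (h : a < 4*n) :
    (a < n ∧ a % n = a) ∨ (n ≤ a ∧ a < 2*n ∧ a % n = a - n) ∨
    (2*n ≤ a ∧ a < 3*n ∧ a % n = a - 2*n) ∨ (3*n ≤ a ∧ a % n = a - 3*n) := by
  have e1 : ∀ b : ℕ, n ≤ b → b % n = (b-n) % n := fun b hb => Nat.mod_eq_sub_mod hb
  have h1 : a < n ∨ (n ≤ a ∧ a < 2*n) ∨ (2*n ≤ a ∧ a < 3*n) ∨ 3*n ≤ a := by omega
  rcases h1 with h1 | h1 | h1 | h1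
  · rw [Nat.mod_eq_of_lt h1]; omega
  · rw [e1 _ (by omega), Nat.mod_eq_of_lt (by omega)]; omega
  · rw [e1 _ (by omega), e1 _ (by omega), Nat.mod_eq_of_lt (by omega)]; omega
  · rw [e1 _ (by omega), e1 _ (by omega), e1 _ (by omega), Nat.mod_eq_of_lt (by omega)]; omega

theorem meqz {n a b : ℕ} (h : (n:ℤ) ∣ (b:ℤ) - (a:ℤ)) : a % n = b % n :=
  Nat.modEq_iff_dvd.mpr h

theorem mulmod (n a b : ℕ) : (a * (b % n)) % n = (a * b) % n := by
  rw [Nat.mul_mod, Nat.mod_mod_of_dvd _ dvd_rfl, ← Nat.mul_mod]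

def sig (n m t x : ℕ) : ℕ :=
  if t = 0 then x
  else if t = 1 then (2*m + 2*(n - x)) % n
  else if t = 2 then (m + 2*x) % n
  else if t = 3 then (m + 2*(n - x)) % n
  else (m + x) % n

def psi (n m t r : ℕ) : ℕ :=
  if t = 0 then r
  else if t = 1 then ((m+1)*(2*m+2*n - r)) % n
  else if t = 2 then ((m+1)*(r+2*n - m)) % n
  else if t = 3 then ((m+1)*(m+n - r)) % n
  else (r + n - m) % n

def vv (n K i : ℕ) : ℕ := ((n - K) * i) % n

def Mg (n m K : ℕ) : Fin n → Fin n → Option ℕ := fun i j =>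
  if ((j:ℕ) + n - (i:ℕ)) % n < 5
  then some (n * (((j:ℕ) + n - (i:ℕ)) % n) + sig n m (((j:ℕ) + n - (i:ℕ)) % n) (vv n K (i:ℕ)))
  else none
theorem VK (n K j t : ℕ) (hn : 0 < n) (hK : K < n) (ht : t ≤ n) :
    vv n K ((j + n - t) % n) = (vv n K j + t*K) % n := by
  unfold vv
  rw [Nat.mod_add_mod, mulmod]
  obtain ⟨a, ha⟩ : ∃ a, a + K = n := ⟨n - K, by omega⟩
  obtain ⟨b, hb⟩ : ∃ b, b + t = j + n := ⟨j + n - t, by omega⟩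
  rw [show n - K = a by omega, show j + n - t = b by omega]
  apply meqz
  have haz : (a:ℤ) + K = n := by exact_mod_cast ha
  have hbz : (b:ℤ) + t = j + n := by exact_mod_cast hb
  refine ⟨(t:ℤ) + K - n, ?_⟩
  push_cast
  have haz' : (a:ℤ) = n - K := by linarith
  have hbz' : (b:ℤ) = j + n - t := by linarith
  rw [haz', hbz']
  ring

theorem vinv (n K i : ℕ) (hn : 5 ≤ n) (hK : K < n) (hK4 : 4*K % n = 1) (hi : i < n) :
    ((n-4) * vv n K i) % n = i := by
  unfold vv
  rw [mulmod]
  obtain ⟨a, ha⟩ : ∃ a, a + K = n := ⟨n - K, by omega⟩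
  obtain ⟨c, hc⟩ : ∃ c, c + 4 = n := ⟨n - 4, by omega⟩
  obtain ⟨q4, hq4⟩ : ∃ q4, n*q4 + 1 = 4*K := by
    have := Nat.div_add_mod (4*K) n; exact ⟨(4*K)/n, by omega⟩
  rw [show n - K = a by omega, show n - 4 = c by omega]
  have : (c * (a * i)) % n = i % n := by
    apply meqz
    have haz : (a:ℤ) + K = n := by exact_mod_cast ha
    have hcz : (c:ℤ) + 4 = n := by exact_mod_cast hc
    have hq4z : (n:ℤ)*q4 + 1 = 4*K := by exact_mod_cast hq4
    refine ⟨(i:ℤ)*(K + 4 - n - q4), ?_⟩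
    push_cast
    have haz' : (a:ℤ) = n - K := by linarith
    have hcz' : (c:ℤ) = n - 4 := by linarith
    rw [haz', hcz']
    linear_combination (i:ℤ) * hq4z
  rwa [Nat.mod_eq_of_lt hi] at this

theorem vval (n K x : ℕ) (hn : 5 ≤ n) (hK : K < n) (hK4 : 4*K % n = 1) (hx : x < n) :
    vv n K (((n-4) * x) % n) = x := by
  unfold vv
  rw [mulmod]
  obtain ⟨a, ha⟩ : ∃ a, a + K = n := ⟨n - K, by omega⟩
  obtain ⟨c, hc⟩ : ∃ c, c + 4 = n := ⟨n - 4, by omega⟩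
  obtain ⟨q4, hq4⟩ : ∃ q4, n*q4 + 1 = 4*K := by
    have := Nat.div_add_mod (4*K) n; exact ⟨(4*K)/n, by omega⟩
  rw [show n - K = a by omega, show n - 4 = c by omega]
  have : (a * (c * x)) % n = x % n := by
    apply meqz
    have haz : (a:ℤ) + K = n := by exact_mod_cast ha
    have hcz : (c:ℤ) + 4 = n := by exact_mod_cast hc
    have hq4z : (n:ℤ)*q4 + 1 = 4*K := by exact_mod_cast hq4
    refine ⟨(x:ℤ)*(K + 4 - n - q4), ?_⟩
    push_cast
    have haz' : (a:ℤ) = n - K := by linarith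
    have hcz' : (c:ℤ) = n - 4 := by linarith
    rw [haz', hcz']
    linear_combination (x:ℤ) * hq4z
  rwa [Nat.mod_eq_of_lt hx] at this

theorem psig1 (n m x : ℕ) (hn : n = 2*m+1) (hm : 2 ≤ m) (hx : x < n) :
    psi n m 1 (sig n m 1 x) = x := by
  show ((m+1)*(2*m+2*n - (2*m + 2*(n - x)) % n)) % n = x
  have hnpos : 0 < n := by omega
  set s := (2*m + 2*(n - x)) % n with hs
  have hslt : s < n := Nat.mod_lt _ hnpos
  obtain ⟨b, hb⟩ : ∃ b, b + x = n := ⟨n - x, by omega⟩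
  obtain ⟨q, hq⟩ : ∃ q, n*q + s = 2*m + 2*b := by
    have := Nat.div_add_mod (2*m + 2*(n-x)) n
    exact ⟨(2*m + 2*(n-x))/n, by omega⟩
  obtain ⟨u, hu⟩ : ∃ u, u + s = 2*m + 2*n := ⟨2*m+2*n - s, by omega⟩
  rw [show 2*m+2*n - s = u by omega]
  have key : ((m+1)*u) % n = x % n := by
    apply meqz
    have hbz : (b:ℤ) + x = n := by exact_mod_cast hb
    have hqz : (n:ℤ)*q + s = 2*m + 2*b := by exact_mod_cast hq
    have huz : (u:ℤ) + s = 2*m + 2*n := by exact_mod_cast hu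
    have hnz : (n:ℤ) = 2*m+1 := by exact_mod_cast hn
    refine ⟨-(x:ℤ) - (m+1)*q, ?_⟩
    push_cast
    have hu2 : (u:ℤ) = 2*x + n*q := by linarith
    rw [hu2, hnz]; ring
  rwa [Nat.mod_eq_of_lt hx] at key

theorem psig2 (n m x : ℕ) (hn : n = 2*m+1) (hm : 2 ≤ m) (hx : x < n) :
    psi n m 2 (sig n m 2 x) = x := by
  show ((m+1)*((m + 2*x) % n + 2*n - m)) % n = x
  have hnpos : 0 < n := by omega
  set s := (m + 2*x) % n with hs
  have hslt : s < n := Nat.mod_lt _ hnpos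
  obtain ⟨q, hq⟩ : ∃ q, n*q + s = m + 2*x := by
    have := Nat.div_add_mod (m + 2*x) n
    exact ⟨(m + 2*x)/n, by omega⟩
  obtain ⟨u, hu⟩ : ∃ u, u + m = s + 2*n := ⟨s + 2*n - m, by omega⟩
  rw [show s + 2*n - m = u by omega]
  have key : ((m+1)*u) % n = x % n := by
    apply meqz
    have hqz : (n:ℤ)*q + s = m + 2*x := by exact_mod_cast hq
    have huz : (u:ℤ) + m = s + 2*n := by exact_mod_cast hu
    have hnz : (n:ℤ) = 2*m+1 := by exact_mod_cast hn
    refine ⟨-(x:ℤ) - (m+1)*(2-q), ?_⟩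
    push_cast
    have hu2 : (u:ℤ) = 2*x + n*(2-q) := by linarith
    rw [hu2, hnz]; ring
  rwa [Nat.mod_eq_of_lt hx] at key

theorem psig3 (n m x : ℕ) (hn : n = 2*m+1) (hm : 2 ≤ m) (hx : x < n) :
    psi n m 3 (sig n m 3 x) = x := by
  show ((m+1)*(m + n - (m + 2*(n - x)) % n)) % n = x
  have hnpos : 0 < n := by omega
  set s := (m + 2*(n - x)) % n with hs
  have hslt : s < n := Nat.mod_lt _ hnpos
  obtain ⟨b, hb⟩ : ∃ b, b + x = n := ⟨n - x, by omega⟩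
  obtain ⟨q, hq⟩ : ∃ q, n*q + s = m + 2*b := by
    have := Nat.div_add_mod (m + 2*(n-x)) n
    exact ⟨(m + 2*(n-x))/n, by omega⟩
  obtain ⟨u, hu⟩ : ∃ u, u + s = m + n := ⟨m + n - s, by omega⟩
  rw [show m + n - s = u by omega]
  have key : ((m+1)*u) % n = x % n := by
    apply meqz
    have hbz : (b:ℤ) + x = n := by exact_mod_cast hb
    have hqz : (n:ℤ)*q + s = m + 2*b := by exact_mod_cast hq
    have huz : (u:ℤ) + s = m + n := by exact_mod_cast hu
    have hnz : (n:ℤ) = 2*m+1 := by exact_mod_cast hn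
    refine ⟨-(x:ℤ) - (m+1)*(q-1), ?_⟩
    push_cast
    have hu2 : (u:ℤ) = 2*x + n*(q-1) := by linarith
    rw [hu2, hnz]; ring
  rwa [Nat.mod_eq_of_lt hx] at key

theorem sigp1 (n m r : ℕ) (hn : n = 2*m+1) (hm : 2 ≤ m) (hr : r < n) :
    sig n m 1 (psi n m 1 r) = r := by
  show (2*m + 2*(n - ((m+1)*(2*m+2*n - r)) % n)) % n = r
  have hnpos : 0 < n := by omega
  obtain ⟨u, hu⟩ : ∃ u, u + r = 2*m + 2*n := ⟨2*m+2*n - r, by omega⟩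
  rw [show 2*m+2*n - r = u by omega]
  set p := ((m+1)*u) % n with hp
  have hplt : p < n := Nat.mod_lt _ hnpos
  obtain ⟨q, hq⟩ : ∃ q, n*q + p = (m+1)*u := by
    have := Nat.div_add_mod ((m+1)*u) n
    exact ⟨((m+1)*u)/n, by omega⟩
  obtain ⟨w, hw⟩ : ∃ w, w + p = n := ⟨n - p, by omega⟩
  rw [show n - p = w by omega]
  have key : (2*m + 2*w) % n = r % n := by
    apply meqz
    have huz : (u:ℤ) + r = 2*m + 2*n := by exact_mod_cast hu
    have hqz : (n:ℤ)*q + p = (m+1)*u := by exact_mod_cast hq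
    have hwz : (w:ℤ) + p = n := by exact_mod_cast hw
    have hnz : (n:ℤ) = 2*m+1 := by exact_mod_cast hn
    refine ⟨6*(m:ℤ)+2 - r - 2*q, ?_⟩
    push_cast
    have hw2 : (w:ℤ) = n - ((m+1)*u - n*q) := by linarith
    have hu2 : (u:ℤ) = 2*m + 2*n - r := by linarith
    rw [hw2, hu2, hnz]; ring
  rwa [Nat.mod_eq_of_lt hr] at key

theorem sigp2 (n m r : ℕ) (hn : n = 2*m+1) (hm : 2 ≤ m) (hr : r < n) :
    sig n m 2 (psi n m 2 r) = r := by
  show (m + 2*(((m+1)*(r+2*n - m)) % n)) % n = r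
  have hnpos : 0 < n := by omega
  obtain ⟨u, hu⟩ : ∃ u, u + m = r + 2*n := ⟨r+2*n - m, by omega⟩
  rw [show r+2*n - m = u by omega]
  set p := ((m+1)*u) % n with hp
  have hplt : p < n := Nat.mod_lt _ hnpos
  obtain ⟨q, hq⟩ : ∃ q, n*q + p = (m+1)*u := by
    have := Nat.div_add_mod ((m+1)*u) n
    exact ⟨((m+1)*u)/n, by omega⟩
  have key : (m + 2*p) % n = r % n := by
    apply meqz
    have huz : (u:ℤ) + m = r + 2*n := by exact_mod_cast hu
    have hqz : (n:ℤ)*q + p = (m+1)*u := by exact_mod_cast hq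
    have hnz : (n:ℤ) = 2*m+1 := by exact_mod_cast hn
    refine ⟨2*(q:ℤ) - r - 3*m - 4, ?_⟩
    push_cast
    have hp2 : (p:ℤ) = (m+1)*u - n*q := by linarith
    have hu2 : (u:ℤ) = r + 2*n - m := by linarith
    rw [hp2, hu2, hnz]; ring
  rwa [Nat.mod_eq_of_lt hr] at key

theorem sigp3 (n m r : ℕ) (hn : n = 2*m+1) (hm : 2 ≤ m) (hr : r < n) :
    sig n m 3 (psi n m 3 r) = r := by
  show (m + 2*(n - ((m+1)*(m+n - r)) % n)) % n = r
  have hnpos : 0 < n := by omega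
  obtain ⟨u, hu⟩ : ∃ u, u + r = m + n := ⟨m+n - r, by omega⟩
  rw [show m+n - r = u by omega]
  set p := ((m+1)*u) % n with hp
  have hplt : p < n := Nat.mod_lt _ hnpos
  obtain ⟨q, hq⟩ : ∃ q, n*q + p = (m+1)*u := by
    have := Nat.div_add_mod ((m+1)*u) n
    exact ⟨((m+1)*u)/n, by omega⟩
  obtain ⟨w, hw⟩ : ∃ w, w + p = n := ⟨n - p, by omega⟩
  rw [show n - p = w by omega]
  have key : (m + 2*w) % n = r % n := by
    apply meqz
    have huz : (u:ℤ) + r = m + n := by exact_mod_cast hu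
    have hqz : (n:ℤ)*q + p = (m+1)*u := by exact_mod_cast hq
    have hwz : (w:ℤ) + p = n := by exact_mod_cast hw
    have hnz : (n:ℤ) = 2*m+1 := by exact_mod_cast hn
    refine ⟨3*(m:ℤ) - r - 2*q, ?_⟩
    push_cast
    have hw2 : (w:ℤ) = n - ((m+1)*u - n*q) := by linarith
    have hu2 : (u:ℤ) = m + n - r := by linarith
    rw [hw2, hu2, hnz]; ring
  rwa [Nat.mod_eq_of_lt hr] at key
theorem psig4 (n m x : ℕ) (hn : n = 2*m+1) (hm : 2 ≤ m) (hx : x < n) :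
    psi n m 4 (sig n m 4 x) = x := by
  show ((m + x) % n + n - m) % n = x
  have A := modv n (m + x) (by omega)
  have B := modv n ((m + x) % n + n - m) (by omega)
  omega

theorem sigp4 (n m r : ℕ) (hn : n = 2*m+1) (hm : 2 ≤ m) (hr : r < n) :
    sig n m 4 (psi n m 4 r) = r := by
  show (m + (r + n - m) % n) % n = r
  have A := modv n (r + n - m) (by omega)
  have B := modv n (m + (r + n - m) % n) (by omega)
  omega

theorem tval (n i t : ℕ) (hi : i < n) (ht : t < n) :
    ((i + t) % n + n - i) % n = t := by
  have A := modv n (i + t) (by omega)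
  have B := modv n ((i + t) % n + n - i) (by omega)
  omega

theorem jval (n i j : ℕ) (hi : i < n) (hj : j < n) :
    (i + (j + n - i) % n) % n = j := by
  have A := modv n (j + n - i) (by omega)
  have B := modv n (i + (j + n - i) % n) (by omega)
  omega

theorem tval2 (n j t : ℕ) (hj : j < n) (ht : t < n) :
    (j + n - (j + n - t) % n) % n = t := by
  have A := modv n (j + n - t) (by omega)
  have B := modv n (j + n - (j + n - t) % n) (by omega)
  omega

theorem sig_lt (n m t x : ℕ) (hn : 0 < n) (ht : t < 5) (hx : x < n) :
    sig n m t x < n := by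
  unfold sig
  split_ifs <;> first | exact hx | exact Nat.mod_lt _ hn

theorem psi_lt (n m t r : ℕ) (hn : 0 < n) (ht : t < 5) (hr : r < n) :
    psi n m t r < n := by
  unfold psi
  split_ifs <;> first | exact hr | exact Nat.mod_lt _ hn

theorem rowsum (n m x : ℕ) (hn : n = 2*m+1) (hm : 2 ≤ m) (hx : x < n) :
    ∑ t ∈ Finset.range 5, (n * t + sig n m t x) = 25*m + 10 := by
  have e : ∑ t ∈ Finset.range 5, (n * t + sig n m t x)
      = n*10 + (x + (2*m + 2*(n - x)) % n + (m + 2*x) % n + (m + 2*(n - x)) % n + (m + x) % n) := by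
    simp [Finset.sum_range_succ, sig]
    ring
  rw [e]
  have A := modv n (2*m + 2*(n - x)) (by omega)
  have B := modv n (m + 2*x) (by omega)
  have C := modv n (m + 2*(n - x)) (by omega)
  have D := modv n (m + x) (by omega)
  omega

theorem E1 (n m K w : ℕ) (hn : n = 2*m+1) (hm : 2 ≤ m) (hK : K < n) (hK2 : 2*K % n = m+1)
    (hw : w < n) : sig n m 1 ((w + K) % n) = (3*n + m - 1 - 2*w) % n := by
  show (2*m + 2*(n - (w + K) % n)) % n = _
  have A := modv n (w + K) (by omega)
  have B := modv n (2*K) (by omega)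
  have C := modv n (2*m + 2*(n - (w + K) % n)) (by omega)
  have D := modv n (3*n + m - 1 - 2*w) (by omega)
  omega

theorem E2 (n m w : ℕ) (hn : n = 2*m+1) (hm : 2 ≤ m) (hw : w < n) :
    sig n m 2 ((w + (m+1)) % n) = (m + 1 + 2*w) % n := by
  show (m + 2*((w + (m+1)) % n)) % n = _
  have A := modv n (w + (m+1)) (by omega)
  have B := modv n (m + 2*((w + (m+1)) % n)) (by omega)
  have C := modv n (m + 1 + 2*w) (by omega)
  omega

theorem E3 (n m K w : ℕ) (hn : n = 2*m+1) (hm : 2 ≤ m) (hK : K < n) (hK2 : 2*K % n = m+1)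
    (hK4 : 4*K % n = 1) (hw : w < n) :
    sig n m 3 ((w + 3*K) % n) = (3*n - 2 - 2*w) % n := by
  show (m + 2*(n - (w + 3*K) % n)) % n = _
  have A := modv n (w + 3*K) (by omega)
  have B := modv n (2*K) (by omega)
  have B2 := modv n (4*K) (by omega)
  have C := modv n (m + 2*(n - (w + 3*K) % n)) (by omega)
  have D := modv n (3*n - 2 - 2*w) (by omega)
  omega

theorem E4 (n m w : ℕ) (hn : n = 2*m+1) (hm : 2 ≤ m) (hw : w < n) :
    sig n m 4 ((w + 1) % n) = (m + 1 + w) % n := by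
  show (m + (w + 1) % n) % n = _
  have A := modv n (w + 1) (by omega)
  have B := modv n (m + (w + 1) % n) (by omega)
  have C := modv n (m + 1 + w) (by omega)
  omega

theorem colfin (n m w : ℕ) (hn : n = 2*m+1) (hm : 2 ≤ m) (hw : w < n) :
    w + (3*n + m - 1 - 2*w) % n + (m + 1 + 2*w) % n + (3*n - 2 - 2*w) % n + (m + 1 + w) % n
      = 5*m := by
  have A := modv n (3*n + m - 1 - 2*w) (by omega)
  have B := modv n (m + 1 + 2*w) (by omega)
  have C := modv n (3*n - 2 - 2*w) (by omega)
  have D := modv n (m + 1 + w) (by omega)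
  omega

section Main

variable (n m K : ℕ)

-- key evaluation of a filled cell
theorem Mg_eval (hn : n = 2*m+1) (hm : 2 ≤ m) (i : Fin n) (t : ℕ) (ht : t < 5) :
    Mg n m K i ⟨((i:ℕ) + t) % n, Nat.mod_lt _ (by omega)⟩
      = some (n * t + sig n m t (vv n K (i:ℕ))) := by
  unfold Mg
  simp only []
  rw [show ((((i:ℕ) + t) % n + n - (i:ℕ)) % n) = t from tval n (i:ℕ) t i.isLt (by omega)]
  rw [if_pos ht]

theorem Mg_isSome_iff (i j : Fin n) :
    (Mg n m K i j).isSome ↔ ((j:ℕ) + n - (i:ℕ)) % n < 5 := by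
  unfold Mg
  split_ifs with h <;> simp [h]

theorem row_filter (hn : n = 2*m+1) (hm : 2 ≤ m) (i : Fin n) :
    Finset.univ.filter (fun j => (Mg n m K i j).isSome)
      = (Finset.range 5).image (fun t => (⟨((i:ℕ) + t) % n, Nat.mod_lt _ (by omega)⟩ : Fin n)) := by
  ext j
  simp only [Finset.mem_filter, Finset.mem_univ, true_and, Finset.mem_image, Finset.mem_range,
    Mg_isSome_iff]
  constructor
  · intro h
    refine ⟨((j:ℕ) + n - (i:ℕ)) % n, h, ?_⟩
    apply Fin.ext
    exact jval n (i:ℕ) (j:ℕ) i.isLt j.isLt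
  · rintro ⟨t, ht5, rfl⟩
    simpa [tval n (i:ℕ) t i.isLt (by omega : t < n)] using ht5

theorem row_inj (hn : n = 2*m+1) (hm : 2 ≤ m) (i : Fin n) :
    ∀ t ∈ Finset.range 5, ∀ t' ∈ Finset.range 5,
      (⟨((i:ℕ) + t) % n, Nat.mod_lt _ (by omega : 0 < n)⟩ : Fin n)
        = ⟨((i:ℕ) + t') % n, Nat.mod_lt _ (by omega)⟩ → t = t' := by
  intro t ht t' ht'
  simp only [Finset.mem_range] at ht ht'
  intro h
  have h2 : ((i:ℕ) + t) % n = ((i:ℕ) + t') % n := congrArg Fin.val h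
  have e1 := tval n (i:ℕ) t i.isLt (by omega : t < n)
  have e2 := tval n (i:ℕ) t' i.isLt (by omega : t' < n)
  rw [h2] at e1
  omega

theorem col_filter (hn : n = 2*m+1) (hm : 2 ≤ m) (j : Fin n) :
    Finset.univ.filter (fun i => (Mg n m K i j).isSome)
      = (Finset.range 5).image (fun t => (⟨((j:ℕ) + n - t) % n, Nat.mod_lt _ (by omega)⟩ : Fin n)) := by
  ext i
  simp only [Finset.mem_filter, Finset.mem_univ, true_and, Finset.mem_image, Finset.mem_range,
    Mg_isSome_iff]
  constructor
  · intro h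
    refine ⟨((j:ℕ) + n - (i:ℕ)) % n, h, ?_⟩
    apply Fin.ext
    exact tval2 n (j:ℕ) (i:ℕ) j.isLt i.isLt
  · rintro ⟨t, ht5, rfl⟩
    simpa [tval2 n (j:ℕ) t j.isLt (by omega : t < n)] using ht5

theorem col_inj (hn : n = 2*m+1) (hm : 2 ≤ m) (j : Fin n) :
    ∀ t ∈ Finset.range 5, ∀ t' ∈ Finset.range 5,
      (⟨((j:ℕ) + n - t) % n, Nat.mod_lt _ (by omega : 0 < n)⟩ : Fin n)
        = ⟨((j:ℕ) + n - t') % n, Nat.mod_lt _ (by omega)⟩ → t = t' := by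
  intro t ht t' ht'
  simp only [Finset.mem_range] at ht ht'
  intro h
  have h2 : ((j:ℕ) + n - t) % n = ((j:ℕ) + n - t') % n := congrArg Fin.val h
  have e1 := tval2 n (j:ℕ) t j.isLt (by omega : t < n)
  have e2 := tval2 n (j:ℕ) t' j.isLt (by omega : t' < n)
  rw [h2] at e1
  omega

theorem Mg_eval_col (hn : n = 2*m+1) (hm : 2 ≤ m) (j : Fin n) (t : ℕ) (ht : t < 5) :
    Mg n m K ⟨((j:ℕ) + n - t) % n, Nat.mod_lt _ (by omega)⟩ j
      = some (n * t + sig n m t (vv n K (((j:ℕ) + n - t) % n))) := by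
  unfold Mg
  simp only []
  rw [show (((j:ℕ) + n - (((j:ℕ) + n - t) % n)) % n) = t from tval2 n (j:ℕ) t j.isLt (by omega)]
  rw [if_pos ht]

end Main

section Assemble

variable {n m K : ℕ}

theorem row_sum (hn : n = 2*m+1) (hm : 2 ≤ m) (i : Fin n) :
    ∑ j, (Mg n m K i j).getD 0 = 25*m + 10 := by
  classical
  have npos : 0 < n := by omega
  rw [← Finset.sum_filter_add_sum_filter_not Finset.univ (fun j => (Mg n m K i j).isSome)
      (fun j => (Mg n m K i j).getD 0)]
  have hzero : ∑ j ∈ Finset.univ.filter (fun j => ¬ (Mg n m K i j).isSome),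
      (Mg n m K i j).getD 0 = 0 := by
    apply Finset.sum_eq_zero
    intro j hj
    rw [Finset.mem_filter] at hj
    rw [Option.not_isSome_iff_eq_none.mp hj.2]
    rfl
  rw [hzero, add_zero, row_filter n m K hn hm i, Finset.sum_image (row_inj n m hn hm i)]
  have heval : ∀ t ∈ Finset.range 5,
      (Mg n m K i ⟨((i:ℕ) + t) % n, Nat.mod_lt _ (by omega)⟩).getD 0
        = n * t + sig n m t (vv n K (i:ℕ)) := by
    intro t ht
    rw [Finset.mem_range] at ht
    rw [Mg_eval n m K hn hm i t ht]
    rfl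
  rw [Finset.sum_congr rfl heval]
  exact rowsum n m (vv n K (i:ℕ)) hn hm (Nat.mod_lt _ npos)

theorem col_sum (hn : n = 2*m+1) (hm : 2 ≤ m) (hK : K < n) (hK2 : 2*K % n = m+1)
    (hK4 : 4*K % n = 1) (j : Fin n) :
    ∑ i, (Mg n m K i j).getD 0 = 25*m + 10 := by
  classical
  have npos : 0 < n := by omega
  rw [← Finset.sum_filter_add_sum_filter_not Finset.univ (fun i => (Mg n m K i j).isSome)
      (fun i => (Mg n m K i j).getD 0)]
  have hzero : ∑ i ∈ Finset.univ.filter (fun i => ¬ (Mg n m K i j).isSome),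
      (Mg n m K i j).getD 0 = 0 := by
    apply Finset.sum_eq_zero
    intro i hi
    rw [Finset.mem_filter] at hi
    rw [Option.not_isSome_iff_eq_none.mp hi.2]
    rfl
  rw [hzero, add_zero, col_filter n m K hn hm j, Finset.sum_image (col_inj n m hn hm j)]
  have heval : ∀ t ∈ Finset.range 5,
      (Mg n m K ⟨((j:ℕ) + n - t) % n, Nat.mod_lt _ (by omega)⟩ j).getD 0
        = n * t + sig n m t ((vv n K (j:ℕ) + t*K) % n) := by
    intro t ht
    rw [Finset.mem_range] at ht
    rw [Mg_eval_col n m K hn hm j t ht]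
    rw [VK n K (j:ℕ) t npos hK (by omega)]
    rfl
  rw [Finset.sum_congr rfl heval]
  set w := vv n K (j:ℕ) with hwdef
  have hw : w < n := Nat.mod_lt _ npos
  rw [Finset.sum_range_succ, Finset.sum_range_succ, Finset.sum_range_succ,
    Finset.sum_range_succ, Finset.sum_range_one]
  have h0 : sig n m 0 ((w + 0*K) % n) = w := by
    have : (w + 0*K) % n = w := by simp [Nat.mod_eq_of_lt hw]
    rw [this]; rfl
  have h1 : sig n m 1 ((w + 1*K) % n) = (3*n + m - 1 - 2*w) % n := by
    rw [one_mul]; exact E1 n m K w hn hm hK hK2 hw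
  have h2 : sig n m 2 ((w + 2*K) % n) = (m + 1 + 2*w) % n := by
    have harg : (w + 2*K) % n = (w + (m+1)) % n := by
      rw [Nat.add_mod w (2*K) n, hK2, Nat.mod_eq_of_lt hw]
    rw [harg]; exact E2 n m w hn hm hw
  have h3 : sig n m 3 ((w + 3*K) % n) = (3*n - 2 - 2*w) % n :=
    E3 n m K w hn hm hK hK2 hK4 hw
  have h4 : sig n m 4 ((w + 4*K) % n) = (m + 1 + w) % n := by
    have harg : (w + 4*K) % n = (w + 1) % n := by
      rw [Nat.add_mod w (4*K) n, hK4, Nat.mod_eq_of_lt hw]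
    rw [harg]; exact E4 n m w hn hm hw
  rw [h0, h1, h2, h3, h4]
  have := colfin n m w hn hm hw
  omega

theorem cell_unique (hn : n = 2*m+1) (hm : 2 ≤ m) (hK : K < n) (hK4 : 4*K % n = 1)
    (e : ℕ) (he : e < 5*n) :
    ∃! p : Fin n × Fin n, Mg n m K p.1 p.2 = some e := by
  have npos : 0 < n := by omega
  have h5n : 5 ≤ n := by omega
  have ht5 : e / n < 5 := (Nat.div_lt_iff_lt_mul npos).mpr (by omega)
  have hr : e % n < n := Nat.mod_lt _ npos
  set t := e / n with htdef
  set r := e % n with hrdef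
  set x := psi n m t r with hxdef
  have hx : x < n := psi_lt n m t r npos ht5 hr
  set i0 : Fin n := ⟨((n-4)*x) % n, Nat.mod_lt _ npos⟩ with hi0
  set j0 : Fin n := ⟨((i0:ℕ) + t) % n, Nat.mod_lt _ npos⟩ with hj0
  have hvx : vv n K (i0:ℕ) = x := vval n K x h5n hK hK4 hx
  have hsig : sig n m t x = r := by
    rw [hxdef]
    interval_cases t
    · rfl
    · exact sigp1 n m r hn hm hr
    · exact sigp2 n m r hn hm hr
    · exact sigp3 n m r hn hm hr
    · exact sigp4 n m r hn hm hr
  refine ⟨(i0, j0), ?_, ?_⟩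
  · show Mg n m K i0 j0 = some e
    have heq := Mg_eval n m K hn hm i0 t ht5
    rw [hvx, hsig] at heq
    rw [show j0 = ⟨((i0:ℕ) + t) % n, Nat.mod_lt _ (by omega)⟩ from rfl]
    rw [heq, Nat.div_add_mod]
  · rintro ⟨pi, pj⟩ hp
    simp only at hp
    unfold Mg at hp
    by_cases hc : ((pj:ℕ) + n - (pi:ℕ)) % n < 5
    · rw [if_pos hc] at hp
      have hval := Option.some.inj hp
      set t' := ((pj:ℕ) + n - (pi:ℕ)) % n with ht'def
      have hvplt : vv n K (pi:ℕ) < n := Nat.mod_lt _ npos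
      have hslt : sig n m t' (vv n K (pi:ℕ)) < n := sig_lt n m t' _ npos hc hvplt
      have htt : t = t' := by
        rw [htdef, ← hval, Nat.mul_add_div npos, Nat.div_eq_of_lt hslt, Nat.add_zero]
      have hrr : sig n m t' (vv n K (pi:ℕ)) = r := by
        rw [hrdef, ← hval, Nat.mul_add_mod, Nat.mod_eq_of_lt hslt]
      have hxx : vv n K (pi:ℕ) = x := by
        rw [hxdef, htt, ← hrr]
        have hgoal : psi n m t' (sig n m t' (vv n K (pi:ℕ))) = vv n K (pi:ℕ) := by
          have hc5 := hc
          interval_cases t'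
          · rfl
          · exact psig1 n m _ hn hm hvplt
          · exact psig2 n m _ hn hm hvplt
          · exact psig3 n m _ hn hm hvplt
          · exact psig4 n m _ hn hm hvplt
        exact hgoal.symm
      have hpi : pi = i0 := by
        apply Fin.ext
        have := vinv n K (pi:ℕ) h5n hK hK4 pi.isLt
        rw [hxx] at this
        exact this.symm
      have hpj : pj = j0 := by
        apply Fin.ext
        have hjv := jval n (pi:ℕ) (pj:ℕ) pi.isLt pj.isLt
        have hfold : ((pj:ℕ) + n - (pi:ℕ)) % n = t' := rfl
        rw [hfold] at hjv
        show (pj:ℕ) = ((i0:ℕ) + t) % n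
        rw [← hpi, htt]
        exact hjv.symm
      rw [Prod.mk.injEq]
      exact ⟨hpi, hpj⟩
    · rw [if_neg hc] at hp
      exact absurd hp (by simp)

end Assemble

theorem row_card (hn : n = 2*m+1) (hm : 2 ≤ m) (i : Fin n) :
    (Finset.univ.filter fun j => (Mg n m K i j).isSome).card = 5 := by
  rw [row_filter n m K hn hm i,
    Finset.card_image_of_injOn (fun a ha b hb hab =>
      row_inj n m hn hm i a (Finset.mem_coe.mp ha) b (Finset.mem_coe.mp hb) hab),
    Finset.card_range]

theorem col_card (hn : n = 2*m+1) (hm : 2 ≤ m) (j : Fin n) :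
    (Finset.univ.filter fun i => (Mg n m K i j).isSome).card = 5 := by
  rw [col_filter n m K hn hm j,
    Finset.card_image_of_injOn (fun a ha b hb hab =>
      col_inj n m hn hm j a (Finset.mem_coe.mp ha) b (Finset.mem_coe.mp hb) hab),
    Finset.card_range]

theorem Mg_bound (hn : n = 2*m+1) (hm : 2 ≤ m) (i j : Fin n) (e : ℕ)
    (h : Mg n m K i j = some e) : e < 5 * n := by
  have npos : 0 < n := by omega
  unfold Mg at h
  by_cases hc : ((j:ℕ) + n - (i:ℕ)) % n < 5
  · rw [if_pos hc] at h
    have hval := Option.some.inj h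
    have hslt : sig n m (((j:ℕ) + n - (i:ℕ)) % n) (vv n K (i:ℕ)) < n :=
      sig_lt n m _ _ npos hc (Nat.mod_lt _ npos)
    nlinarith [hval, hslt, hc]
  · rw [if_neg hc] at h
    exact absurd h (by simp)

end FiveDiag

theorem five_diagonal_magic_square (n : ℕ) (hn : 5 ≤ n) (hno : Odd n) :
    ∃ M : Fin n → Fin n → Option ℕ,
      IsMagicWithSum n 5 (5 * (5 * n - 1) / 2) M ∧ IsKDiagonal n 5 M := by
  obtain ⟨m, hm'⟩ := hno
  have hn2 : n = 2*m+1 := by omega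
  have hm : 2 ≤ m := by omega
  have npos : 0 < n := by omega
  set K : ℕ := ((m+1)^2) % n with hKdef
  have hK : K < n := Nat.mod_lt _ npos
  have hK4 : 4*K % n = 1 := by
    rw [hKdef, FiveDiag.mulmod]
    rw [show 4*(m+1)^2 = 1 + (n+2)*n by subst hn2; ring]
    rw [Nat.add_mul_mod_self_right, Nat.mod_eq_of_lt (by omega)]
  have hK2 : 2*K % n = m+1 := by
    have h1 : (2*(2*K % n)) % n = 1 := by
      rw [FiveDiag.mulmod, show 2*(2*K) = 4*K by ring, hK4]
    have hlt : 2*K % n < n := Nat.mod_lt _ npos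
    have A := FiveDiag.modv n (2*(2*K % n)) (by omega)
    omega
  have hS : 5 * (5 * n - 1) / 2 = 25*m + 10 := by omega
  refine ⟨FiveDiag.Mg n m K, ⟨?_, ?_, ?_, ?_, ?_, ?_⟩, ?_⟩
  · intro e he
    exact FiveDiag.cell_unique hn2 hm hK hK4 e (by omega)
  · intro i j e h
    have := FiveDiag.Mg_bound hn2 hm i j e h
    omega
  · intro i; exact FiveDiag.row_card hn2 hm i
  · intro j; exact FiveDiag.col_card hn2 hm j
  · intro i; rw [hS]; exact FiveDiag.row_sum hn2 hm i
  · intro j; rw [hS]; exact FiveDiag.col_sum hn2 hm hK hK2 hK4 j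
  · refine ⟨0, fun i j hsome => ?_⟩
    have h5 := (FiveDiag.Mg_isSome_iff n m K i j).mp hsome
    refine ⟨((j:ℕ) + n - (i:ℕ)) % n, h5, ?_⟩
    rw [Nat.add_zero]
    exact (FiveDiag.jval n (i:ℕ) (j:ℕ) i.isLt j.isLt).symm
end

section
/- If there exist an ℓ-diagonal magic square of order n and an m-diagonal magic square of order n with ℓ + m ≤ n, then there exists an (ℓ+m)-diagonal magic square of order n. -/
/-!
Rotating the columns of a square permutes the cells of every row and keeps every column intact,
so it preserves the magic property while moving the occupied broken diagonals. Rotate the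
`l`-diagonal square onto the diagonals `0, …, l - 1` and the `m`-diagonal one onto
`l, …, l + m - 1`; as `l + m ≤ n` these bands are disjoint. Overlaying the first square with the
second one raised by `l * n` then uses each of `0, …, (l + m) * n - 1` exactly once, fills
`l + m` cells of every line, and has all line sums equal to `S_A + S_B + m * (l * n)`.
-/

theorem IsMagicWithSum.comp_perm {n k S : ℕ} {M : Fin n → Fin n → Option ℕ}
    (hM : IsMagicWithSum n k S M) (σ : Equiv.Perm (Fin n)) :
    IsMagicWithSum n k S (fun i j => M i (σ j)) := by
  obtain ⟨hval, hlt, hrow, hcol, hrowSum, hcolSum⟩ := hM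
  refine ⟨fun e he => ?_, fun i j => hlt i (σ j), fun i => ?_, fun j => hcol (σ j),
    fun i => ?_, fun j => hcolSum (σ j)⟩
  · let τ : Fin n × Fin n ≃ Fin n × Fin n := (Equiv.refl _).prodCongr σ
    exact (τ.existsUnique_congr_right (q := fun p => M p.1 p.2 = some e)).mpr (hval e he)
  · rw [← hrow i]
    exact Finset.card_bij' (fun j _ => σ j) (fun j _ => σ.symm j) (by simp) (by simp)
      (by simp) (by simp)
  · rw [← hrowSum i]
    exact Equiv.sum_comp σ fun j => (M i j).getD 0

lemma exists_perm_val_eq_add_mod (n c : ℕ) :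
    ∃ σ : Equiv.Perm (Fin n), ∀ j, (σ j : ℕ) = ((j : ℕ) + c) % n := by
  rcases n.eq_zero_or_pos with rfl | hn
  · exact ⟨Equiv.refl _, fun j => j.elim0⟩
  · have : NeZero n := ⟨hn.ne'⟩
    refine ⟨Equiv.addRight (Fin.ofNat n c), fun j => ?_⟩
    simp [Fin.val_add, Nat.add_mod]

section Superpose

def superpose (N : ℕ) (a b : Option ℕ) : Option ℕ :=
  a.or (b.map (· + N))

variable {N e : ℕ} {a b : Option ℕ}

@[simp]
lemma isSome_superpose : (superpose N a b).isSome = (a.isSome || b.isSome) := by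
  cases a <;> cases b <;> rfl

lemma getD_superpose (hab : a = none ∨ b = none) :
    (superpose N a b).getD 0 = a.getD 0 + b.getD 0 + if b.isSome then N else 0 := by
  cases a <;> cases b <;> simp_all [superpose]

lemma superpose_eq_some_of_lt (he : e < N) : superpose N a b = some e ↔ a = some e := by
  cases a <;> cases b <;> simp [superpose]
  omega

lemma superpose_eq_some_add (hab : a = none ∨ b = none) (ha : ∀ x, a = some x → x < N) :
    superpose N a b = some (e + N) ↔ b = some e := by
  cases a <;> cases b <;> simp_all [superpose]
  omega

variable {ι : Type*} [Fintype ι] {f g : ι → Option ℕ}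

lemma card_filter_isSome_superpose [DecidableEq ι] (hfg : ∀ x, f x = none ∨ g x = none) :
    (Finset.univ.filter fun x => (superpose N (f x) (g x)).isSome).card =
      (Finset.univ.filter fun x => (f x).isSome).card +
        (Finset.univ.filter fun x => (g x).isSome).card := by
  rw [← Finset.card_union_of_disjoint]
  · congr 1
    ext x
    simp
  · refine Finset.disjoint_filter.mpr fun x _ hf hg => ?_
    rcases hfg x with h | h <;> simp [h] at hf hg

lemma sum_getD_superpose (hfg : ∀ x, f x = none ∨ g x = none) :
    ∑ x, (superpose N (f x) (g x)).getD 0 =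
      ∑ x, (f x).getD 0 + ∑ x, (g x).getD 0 +
        (Finset.univ.filter fun x => (g x).isSome).card * N := by
  simp only [getD_superpose (hfg _), Finset.sum_add_distrib, ← Finset.sum_filter,
    Finset.sum_const, smul_eq_mul]

end Superpose

theorem IsMagicWithSum.superpose {n l m SA SB : ℕ} {A B : Fin n → Fin n → Option ℕ}
    (hA : IsMagicWithSum n l SA A) (hB : IsMagicWithSum n m SB B)
    (hAB : ∀ i j, A i j = none ∨ B i j = none) :
    IsMagicWithSum n (l + m) (SA + SB + m * (l * n))
      (fun i j => superpose (l * n) (A i j) (B i j)) := by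
  obtain ⟨hAval, hAlt, hArow, hAcol, hArowSum, hAcolSum⟩ := hA
  obtain ⟨hBval, hBlt, hBrow, hBcol, hBrowSum, hBcolSum⟩ := hB
  have hsplit : (l + m) * n = l * n + m * n := add_mul l m n
  refine ⟨fun e he => ?_, fun i j e he => ?_, fun i => ?_, fun j => ?_, fun i => ?_, fun j => ?_⟩
  · rcases lt_or_ge e (l * n) with hel | hel
    · simpa only [superpose_eq_some_of_lt hel] using hAval e hel
    · obtain ⟨e, rfl⟩ := Nat.exists_eq_add_of_le' hel
      simpa only [superpose_eq_some_add (hAB _ _) (hAlt _ _)] using hBval e (by omega)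
  · rcases lt_or_ge e (l * n) with hel | hel
    · omega
    · obtain ⟨e, rfl⟩ := Nat.exists_eq_add_of_le' hel
      have := hBlt i j e ((superpose_eq_some_add (hAB i j) (hAlt i j)).mp he)
      omega
  · rw [card_filter_isSome_superpose (hAB i), hArow, hBrow]
  · rw [card_filter_isSome_superpose (hAB · j), hAcol, hBcol]
  · rw [sum_getD_superpose (hAB i), hArowSum, hBrowSum, hBrow]
  · rw [sum_getD_superpose (hAB · j), hAcolSum, hBcolSum, hBcol]

def OnDiagonals (n d k : ℕ) (M : Fin n → Fin n → Option ℕ) : Prop :=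
  ∀ i j : Fin n, (M i j).isSome → ∃ t < k, (j : ℕ) = ((i : ℕ) + d + t) % n

section OnDiagonals

variable {n d k : ℕ} {M : Fin n → Fin n → Option ℕ}

lemma OnDiagonals.comp_perm {σ : Equiv.Perm (Fin n)} {c e : ℕ}
    (hσ : ∀ j, (σ j : ℕ) = ((j : ℕ) + c) % n) (hce : e + c ≡ d [MOD n])
    (hM : OnDiagonals n d k M) : OnDiagonals n e k (fun i j => M i (σ j)) := by
  intro i j hij
  obtain ⟨t, ht, hj⟩ := hM i (σ j) hij
  refine ⟨t, ht, ?_⟩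
  have : (j : ℕ) + c ≡ (i : ℕ) + e + t + c [MOD n] :=
    calc (j : ℕ) + c ≡ (i : ℕ) + d + t [MOD n] := by
          rw [Nat.ModEq, ← hσ, ← hj]
      _ ≡ (i : ℕ) + (e + c) + t [MOD n] := ((hce.symm.add_left _).add_right _)
      _ = (i : ℕ) + e + t + c := by ring
  rw [← Nat.mod_eq_of_lt j.isLt]
  exact Nat.ModEq.add_right_cancel' c this

lemma OnDiagonals.eq_none_or_eq_none {l m : ℕ} {A B : Fin n → Fin n → Option ℕ}
    (hA : OnDiagonals n d l A) (hB : OnDiagonals n (d + l) m B) (hlm : l + m ≤ n)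
    (i j : Fin n) : A i j = none ∨ B i j = none := by
  by_contra! h
  obtain ⟨t, ht, hjt⟩ := hA i j (Option.ne_none_iff_isSome.mp h.1)
  obtain ⟨s, hs, hjs⟩ := hB i j (Option.ne_none_iff_isSome.mp h.2)
  have : (i : ℕ) + d + t ≡ (i : ℕ) + d + (l + s) [MOD n] := by
    rw [Nat.ModEq, ← hjt, hjs]
    ac_rfl
  have := Nat.ModEq.eq_of_lt_of_lt (Nat.ModEq.add_left_cancel' _ this) (by omega) (by omega)
  omega

lemma OnDiagonals.superpose {l m N : ℕ} {A B : Fin n → Fin n → Option ℕ}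
    (hA : OnDiagonals n d l A) (hB : OnDiagonals n (d + l) m B) :
    OnDiagonals n d (l + m) (fun i j => superpose N (A i j) (B i j)) := by
  intro i j hij
  have : (A i j).isSome ∨ (B i j).isSome := by simpa using hij
  rcases this with ha | hb
  · obtain ⟨t, ht, hj⟩ := hA i j ha
    exact ⟨t, by omega, hj⟩
  · obtain ⟨s, hs, hj⟩ := hB i j hb
    exact ⟨l + s, by omega, by rw [hj]; ac_rfl⟩

end OnDiagonals

theorem diagonal_magic_add (n l m : ℕ) (hlm : l + m ≤ n)
    (hA : ∃ A : Fin n → Fin n → Option ℕ, IsDiagonalMagic n l A)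
    (hB : ∃ B : Fin n → Fin n → Option ℕ, IsDiagonalMagic n m B) :
    ∃ C : Fin n → Fin n → Option ℕ, IsDiagonalMagic n (l + m) C := by
  obtain ⟨A, ⟨SA, hAm⟩, dA, hAd⟩ := hA
  obtain ⟨B, ⟨SB, hBm⟩, dB, hBd⟩ := hB
  obtain ⟨σ, hσ⟩ := exists_perm_val_eq_add_mod n dA
  obtain ⟨τ, hτ⟩ := exists_perm_val_eq_add_mod n (dB + (n - l))
  have hA' : OnDiagonals n 0 l (fun i j => A i (σ j)) :=
    OnDiagonals.comp_perm hσ (by rw [zero_add]) hAd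
  have hB' : OnDiagonals n (0 + l) m (fun i j => B i (τ j)) :=
    OnDiagonals.comp_perm hτ
      (by rw [show 0 + l + (dB + (n - l)) = dB + n by omega]; exact Nat.add_mod_right dB n) hBd
  exact ⟨_, ⟨_, (hAm.comp_perm σ).superpose (hBm.comp_perm τ) (hA'.eq_none_or_eq_none hB' hlm)⟩,
    0, hA'.superpose hB'⟩
end

section
/- For every odd integer n ≥ 3 and every integer k with 3 ≤ k ≤ n, there exists a k-diagonal magic square of order n. -/
open Finset Function

namespace DiagonalMagic

theorem val_add_val_of_add_eq_neg_one {n : ℕ} [NeZero n] {a b : ZMod n} (hab : a + b = -1) :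
    a.val + b.val = n - 1 := by
  have ha := a.val_lt
  have hb : b = ((n - 1 - a.val : ℕ) : ZMod n) := by
    rw [Nat.cast_sub (by omega), Nat.cast_sub (by omega), ZMod.natCast_self, ZMod.natCast_zmod_val]
    linear_combination hab
  rw [hb, ZMod.val_cast_of_lt (by omega)]
  omega

theorem two_mul_add_one_eq_zero (h : ℕ) : 2 * (h : ZMod (2 * h + 1)) + 1 = 0 := by
  exact_mod_cast ZMod.natCast_self (2 * h + 1)

theorem val_add_val_add_val_eq_three_mul {h : ℕ} {a b c : ZMod (2 * h + 1)} (hb : b = a + h)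
    (hc : c = -1 - 2 * a) : a.val + b.val + c.val = 3 * h := by
  obtain ⟨u, hu, rfl⟩ : ∃ u < 2 * h + 1, (u : ZMod (2 * h + 1)) = a :=
    ⟨a.val, a.val_lt, ZMod.natCast_zmod_val a⟩
  have key := two_mul_add_one_eq_zero h
  rw [ZMod.val_cast_of_lt hu]
  rcases le_or_gt u h with hle | hlt
  · have hb' : b = ((u + h : ℕ) : ZMod (2 * h + 1)) := by push_cast; exact hb
    have hc' : c = ((2 * h - 2 * u : ℕ) : ZMod (2 * h + 1)) := by
      rw [Nat.cast_sub (by omega)]; push_cast; linear_combination hc - key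
    rw [hb', hc', ZMod.val_cast_of_lt (by omega), ZMod.val_cast_of_lt (by omega)]
    omega
  · have hb' : b = ((u - h - 1 : ℕ) : ZMod (2 * h + 1)) := by
      rw [Nat.cast_sub (by omega), Nat.cast_sub (by omega)]; linear_combination hb + key
    have hc' : c = ((4 * h + 1 - 2 * u : ℕ) : ZMod (2 * h + 1)) := by
      rw [Nat.cast_sub (by omega)]; push_cast; linear_combination hc - 2 * key
    rw [hb', hc', ZMod.val_cast_of_lt (by omega), ZMod.val_cast_of_lt (by omega)]
    omega

theorem bijective_affine {R : Type*} [Ring R] (c : R) {d : R} (hd : IsUnit d) :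
    Bijective fun x => c + d * x :=
  (AddGroup.addLeft_bijective c).comp (IsUnit.isUnit_iff_mulLeft_bijective.mp hd)

/-- `f t` is the permutation placed along the `t`-th broken diagonal of `diagonalSquare`;
`sum_val` makes its row sums and `sum_val_sub` its column sums constant. -/
structure IsBalanced (n m s : ℕ) (f : ℕ → ZMod n → ZMod n) : Prop where
  bijective : ∀ t < m, Bijective (f t)
  sum_val : ∀ x, ∑ t ∈ range m, (f t x).val = s
  sum_val_sub : ∀ x, ∑ t ∈ range m, (f t (x - t)).val = s

def appendShifted {n : ℕ} (a : ℕ) (f g : ℕ → ZMod n → ZMod n) : ℕ → ZMod n → ZMod n :=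
  fun t => if t < a then f t else fun x => g (t - a) (x + a)

theorem IsBalanced.append {n a b s s' : ℕ} {f g : ℕ → ZMod n → ZMod n}
    (hf : IsBalanced n a s f) (hg : IsBalanced n b s' g) :
    IsBalanced n (a + b) (s + s') (appendShifted a f g) where
  bijective t ht := by
    unfold appendShifted
    split_ifs with hta
    · exact hf.bijective t hta
    · exact (hg.bijective (t - a) (by omega)).comp (AddGroup.addRight_bijective _)
  sum_val x := by
    rw [sum_range_add, ← hf.sum_val x, ← hg.sum_val (x + a)]
    congr 1
    · exact sum_congr rfl fun t ht => by simp [appendShifted, mem_range.mp ht]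
    · exact sum_congr rfl fun t _ => by simp [appendShifted]
  sum_val_sub x := by
    rw [sum_range_add, ← hf.sum_val_sub x, ← hg.sum_val_sub x]
    congr 1
    · exact sum_congr rfl fun t ht => by simp [appendShifted, mem_range.mp ht]
    · refine sum_congr rfl fun t _ => ?_
      simp only [appendShifted, add_lt_iff_neg_left, not_lt_zero, if_false,
        add_tsub_cancel_left, Nat.cast_add]
      ring_nf

section Blocks

variable (h : ℕ)

theorem isUnit_natCast_add_one : IsUnit ((h : ZMod (2 * h + 1)) + 1) :=
  IsUnit.of_mul_eq_one 2 (by linear_combination two_mul_add_one_eq_zero h)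

theorem isUnit_natCast : IsUnit (h : ZMod (2 * h + 1)) :=
  IsUnit.of_mul_eq_one (-2) (by linear_combination -two_mul_add_one_eq_zero h)

def tripleBlock : ℕ → ZMod (2 * h + 1) → ZMod (2 * h + 1)
  | 0 => fun x => h + (h + 1) * x
  | 1 => fun x => -1 - x
  | _ => fun x => (h + 1) * x

def quadrupleBlock : ℕ → ZMod (2 * h + 1) → ZMod (2 * h + 1)
  | 0 => fun x => x
  | 1 => fun x => -1 - x
  | 2 => fun x => -3 - x
  | _ => fun x => 2 + x

def quintupleBlock : ℕ → ZMod (2 * h + 1) → ZMod (2 * h + 1)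
  | 0 => fun x => x
  | 1 => fun x => 3 * h + h * x
  | 2 => fun x => -1 - x
  | 3 => fun x => -2 + h * x
  | _ => fun x => 2 + x

theorem isBalanced_tripleBlock : IsBalanced (2 * h + 1) 3 (3 * h) (tripleBlock h) where
  bijective t ht := by
    interval_cases t
    · exact bijective_affine _ (isUnit_natCast_add_one h)
    · exact (Equiv.subLeft _).bijective
    · exact IsUnit.isUnit_iff_mulLeft_bijective.mp (isUnit_natCast_add_one h)
  sum_val x := by
    simp only [sum_range_succ, sum_range_zero, zero_add, tripleBlock]
    have := val_add_val_add_val_eq_three_mul (h := h) (a := (h + 1) * x)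
      (b := h + (h + 1) * x) (c := -1 - x) (by ring)
      (by linear_combination x * two_mul_add_one_eq_zero h)
    omega
  sum_val_sub x := by
    simp only [sum_range_succ, sum_range_zero, zero_add, tripleBlock]
    push_cast
    have := val_add_val_add_val_eq_three_mul (h := h) (a := h + (h + 1) * (x - 0))
      (b := (h + 1) * (x - 2)) (c := -1 - (x - 1))
      (by linear_combination -2 * two_mul_add_one_eq_zero h)
      (by linear_combination (1 + x) * two_mul_add_one_eq_zero h)
    omega

theorem isBalanced_quadrupleBlock : IsBalanced (2 * h + 1) 4 (4 * h) (quadrupleBlock h) where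
  bijective t ht := by
    interval_cases t
    · exact bijective_id
    · exact (Equiv.subLeft _).bijective
    · exact (Equiv.subLeft _).bijective
    · exact AddGroup.addLeft_bijective _
  sum_val x := by
    simp only [sum_range_succ, sum_range_zero, zero_add, quadrupleBlock]
    have h1 := val_add_val_of_add_eq_neg_one (a := x) (b := -1 - x) (by ring)
    have h2 := val_add_val_of_add_eq_neg_one (a := -3 - x) (b := 2 + x) (by ring)
    omega
  sum_val_sub x := by
    simp only [sum_range_succ, sum_range_zero, zero_add, quadrupleBlock]
    push_cast
    have h1 := val_add_val_of_add_eq_neg_one (a := x - 0) (b := -3 - (x - 2)) (by ring)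
    have h2 := val_add_val_of_add_eq_neg_one (a := -1 - (x - 1)) (b := 2 + (x - 3)) (by ring)
    omega

theorem isBalanced_quintupleBlock : IsBalanced (2 * h + 1) 5 (5 * h) (quintupleBlock h) where
  bijective t ht := by
    interval_cases t
    · exact bijective_id
    · exact bijective_affine _ (isUnit_natCast h)
    · exact (Equiv.subLeft _).bijective
    · exact bijective_affine _ (isUnit_natCast h)
    · exact AddGroup.addLeft_bijective _
  sum_val x := by
    simp only [sum_range_succ, sum_range_zero, zero_add, quintupleBlock]
    have h1 := val_add_val_of_add_eq_neg_one (a := x) (b := -1 - x) (by ring)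
    have h2 := val_add_val_add_val_eq_three_mul (h := h) (a := 3 * h + h * x)
      (b := -2 + h * x) (c := 2 + x)
      (by linear_combination -2 * two_mul_add_one_eq_zero h)
      (by linear_combination (3 + x) * two_mul_add_one_eq_zero h)
    omega
  sum_val_sub x := by
    simp only [sum_range_succ, sum_range_zero, zero_add, quintupleBlock]
    push_cast
    have h1 := val_add_val_of_add_eq_neg_one (a := -1 - (x - 2)) (b := 2 + (x - 4)) (by ring)
    have h2 := val_add_val_add_val_eq_three_mul (h := h) (a := -2 + h * (x - 3))
      (b := 3 * h + h * (x - 1)) (c := x - 0)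
      (by linear_combination 2 * two_mul_add_one_eq_zero h)
      (by linear_combination (x - 3) * two_mul_add_one_eq_zero h)
    omega

end Blocks

theorem exists_isBalanced (h : ℕ) {k : ℕ} (hk : 3 ≤ k) :
    ∃ f, IsBalanced (2 * h + 1) k (k * h) f := by
  induction k using Nat.strong_induction_on with
  | _ k ih =>
    obtain rfl | rfl | rfl | hk6 : k = 3 ∨ k = 4 ∨ k = 5 ∨ 6 ≤ k := by omega
    · exact ⟨_, isBalanced_tripleBlock h⟩
    · exact ⟨_, isBalanced_quadrupleBlock h⟩
    · exact ⟨_, isBalanced_quintupleBlock h⟩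
    · obtain ⟨f, hf⟩ := ih (k - 3) (by omega) (by omega)
      have := hf.append (isBalanced_tripleBlock h)
      rw [← add_mul, Nat.sub_add_cancel (by omega : 3 ≤ k)] at this
      exact ⟨_, this⟩

section Square

variable {n k : ℕ} {f : ℕ → ZMod n → ZMod n}

def diagonalCell (n k : ℕ) (f : ℕ → ZMod n → ZMod n) (t : ℕ) (x : ZMod n) : Option ℕ :=
  if t < k then some (n * t + (f t x).val) else none

theorem diagonalCell_eq_some_iff {t : ℕ} {x : ZMod n} {e : ℕ} :
    diagonalCell n k f t x = some e ↔ t < k ∧ n * t + (f t x).val = e := by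
  unfold diagonalCell
  split_ifs with ht <;> simp [ht]

theorem sum_range_diagonalCell {M : Type*} [AddCommMonoid M] (φ : Option ℕ → M)
    (hφ : φ none = 0) (hkn : k ≤ n) (g : ℕ → ZMod n) :
    ∑ t ∈ range n, φ (diagonalCell n k f t (g t)) =
      ∑ t ∈ range k, φ (some (n * t + (f t (g t)).val)) := by
  rw [← sum_subset (range_subset_range.mpr hkn) fun t _ ht => by
    simp [diagonalCell, mem_range.not.mp ht, hφ]]
  exact sum_congr rfl fun t ht => by simp [diagonalCell, mem_range.mp ht]

theorem existsUnique_diagonalCell [NeZero n] (hkn : k ≤ n) (hf : ∀ t < k, Bijective (f t))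
    {e : ℕ} (he : e < k * n) : ∃! p : ZMod n × ZMod n, diagonalCell n k f p.2.val p.1 = some e := by
  have hn : 0 < n := Nat.pos_of_neZero n
  have ht : e / n < k := Nat.div_lt_of_lt_mul (by linarith)
  obtain ⟨x, hx⟩ := (hf _ ht).2 (e % n : ℕ)
  refine ⟨(x, (e / n : ℕ)), ?_, ?_⟩
  · dsimp only
    rw [diagonalCell_eq_some_iff, ZMod.val_cast_of_lt (by omega), hx,
      ZMod.val_cast_of_lt (Nat.mod_lt _ hn)]
    exact ⟨ht, Nat.div_add_mod e n⟩
  · rintro ⟨y, z⟩ hyz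
    dsimp only at hyz
    obtain ⟨hz, rfl⟩ := diagonalCell_eq_some_iff.mp hyz
    have hv := (f z.val y).val_lt
    have hdiv : (n * z.val + (f z.val y).val) / n = z.val := by
      rw [add_comm, Nat.add_mul_div_left _ _ hn, Nat.div_eq_of_lt hv, zero_add]
    have hmod : (n * z.val + (f z.val y).val) % n = (f z.val y).val := by
      rw [add_comm, Nat.add_mul_mod_self_left, Nat.mod_eq_of_lt hv]
    rw [hdiv, hmod, ZMod.natCast_zmod_val] at hx
    rw [hdiv, ZMod.natCast_zmod_val, (hf _ hz).1 hx]

variable [NeZero n]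

theorem val_finEquiv (i : Fin n) : (ZMod.finEquiv n i).val = i := by
  cases n with
  | zero => exact absurd rfl (NeZero.ne 0)
  | succ m => rfl

theorem sum_univ_val {M : Type*} [AddCommMonoid M] (G : ℕ → M) :
    ∑ z : ZMod n, G z.val = ∑ t ∈ range n, G t := by
  rw [← (ZMod.finEquiv n).toEquiv.sum_comp]
  simp only [RingEquiv.toEquiv_eq_coe, EquivLike.coe_coe, val_finEquiv]
  exact Fin.sum_univ_eq_sum_range G n

variable (n k f) in
def diagonalSquare (i j : Fin n) : Option ℕ :=
  diagonalCell n k f (ZMod.finEquiv n j - ZMod.finEquiv n i).val (ZMod.finEquiv n i)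

theorem sum_diagonalSquare_row {M : Type*} [AddCommMonoid M] (φ : Option ℕ → M)
    (hφ : φ none = 0) (hkn : k ≤ n) (i : Fin n) :
    ∑ j, φ (diagonalSquare n k f i j) =
      ∑ t ∈ range k, φ (some (n * t + (f t (ZMod.finEquiv n i)).val)) := by
  set x := ZMod.finEquiv n i
  calc ∑ j, φ (diagonalSquare n k f i j) = ∑ y : ZMod n, φ (diagonalCell n k f (y - x).val x) :=
        (ZMod.finEquiv n).toEquiv.sum_comp fun y => φ (diagonalCell n k f (y - x).val x)
    _ = ∑ z : ZMod n, φ (diagonalCell n k f z.val x) :=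
        (Equiv.subRight x).sum_comp fun z => φ (diagonalCell n k f z.val x)
    _ = _ := by rw [sum_univ_val (fun t => φ (diagonalCell n k f t x)),
        sum_range_diagonalCell φ hφ hkn fun _ => x]

theorem sum_diagonalSquare_col {M : Type*} [AddCommMonoid M] (φ : Option ℕ → M)
    (hφ : φ none = 0) (hkn : k ≤ n) (j : Fin n) :
    ∑ i, φ (diagonalSquare n k f i j) =
      ∑ t ∈ range k, φ (some (n * t + (f t (ZMod.finEquiv n j - t)).val)) := by
  set y := ZMod.finEquiv n j
  calc ∑ i, φ (diagonalSquare n k f i j) = ∑ x : ZMod n, φ (diagonalCell n k f (y - x).val x) :=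
        (ZMod.finEquiv n).toEquiv.sum_comp fun x => φ (diagonalCell n k f (y - x).val x)
    _ = ∑ z : ZMod n, φ (diagonalCell n k f z.val (y - z.val)) := by
        rw [← (Equiv.subLeft y).sum_comp]
        simp only [Equiv.subLeft_apply, sub_sub_cancel, ZMod.natCast_zmod_val]
    _ = _ := by rw [sum_univ_val (fun t => φ (diagonalCell n k f t (y - t))),
        sum_range_diagonalCell φ hφ hkn fun t => y - t]

theorem isDiagonalMagic_diagonalSquare {s : ℕ} (hkn : k ≤ n) (hf : IsBalanced n k s f) :
    IsDiagonalMagic n k (diagonalSquare n k f) := by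
  refine ⟨⟨n * ∑ t ∈ range k, t + s, fun e he => ?_, fun i j e he => ?_, fun i => ?_,
    fun j => ?_, fun i => ?_, fun j => ?_⟩, 0, fun i j hij => ?_⟩
  · let E := (ZMod.finEquiv n).toEquiv
    exact (E.prodShear fun i => E.trans (Equiv.subRight (E i))).existsUnique_congr
      (fun _ => Iff.rfl) |>.mpr (existsUnique_diagonalCell hkn hf.bijective he)
  · obtain ⟨ht, rfl⟩ := diagonalCell_eq_some_iff.mp he
    have := (f (ZMod.finEquiv n j - ZMod.finEquiv n i).val (ZMod.finEquiv n i)).val_lt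
    nlinarith
  · rw [card_filter, sum_diagonalSquare_row (fun o => if o.isSome then 1 else 0) rfl hkn]
    simp
  · rw [card_filter, sum_diagonalSquare_col (fun o => if o.isSome then 1 else 0) rfl hkn]
    simp
  · rw [sum_diagonalSquare_row (fun o => o.getD 0) rfl hkn]
    simp [sum_add_distrib, mul_sum, hf.sum_val]
  · rw [sum_diagonalSquare_col (fun o => o.getD 0) rfl hkn]
    simp [sum_add_distrib, mul_sum, hf.sum_val_sub]
  · have ht : (ZMod.finEquiv n j - ZMod.finEquiv n i).val < k := by
      by_contra ht
      simp [diagonalSquare, diagonalCell, ht] at hij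
    refine ⟨_, ht, ?_⟩
    rw [add_zero, ← val_finEquiv i, ← val_finEquiv j, ← ZMod.val_add, add_sub_cancel]

end Square

end DiagonalMagic

theorem diagonal_magic_odd_order (n k : ℕ) (hno : Odd n) (hk : 3 ≤ k) (hkn : k ≤ n) :
    ∃ M : Fin n → Fin n → Option ℕ, IsDiagonalMagic n k M := by
  obtain ⟨h, rfl⟩ := hno
  obtain ⟨f, hf⟩ := DiagonalMagic.exists_isBalanced h hk
  exact ⟨_, DiagonalMagic.isDiagonalMagic_diagonalSquare hkn hf⟩
end

section
/- For all even integers n and k with 4 ≤ k ≤ n, there exists a k-diagonal magic square of order n. -/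
namespace DiagMagicAux

/-- number of "duo" column pairs -/
def DD (k : ℕ) : ℕ := if (k/2) % 2 = 0 then k/2/2 else (k/2 - 3)/2

/-- The raw transversal array: `i < n` rows, `s < h` columns. -/
def Xraw (n m D M i s : ℕ) : ℕ :=
  if s < 2*D then
    (if s % 2 = 0 then (s/2)*n + i else M - 1 - ((s/2)*n + i))
  else if i < m then
    (if s = 2*D then M + 3*m + i else if s = 2*D+1 then M + 6*m - 2 - 2*i else M + 11*m + i)
  else
    (if s = 2*D then M + 2*m + (i - m) else if s = 2*D+1 then M + 8*m - 2 - 2*(i - m)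
     else M + 10*m + (i - m))

def Xf (n k i s : ℕ) : ℕ := Xraw n (n/2) (DD k) (2 * DD k * n) i s

def Wf (n k i t : ℕ) : ℕ :=
  if t % 2 = 0 then Xf n k i (t/2) else k*n - 1 - Xf n k ((i+1) % n) (t/2)

lemma mod_small {a n : ℕ} (h : a < 2*n) : a % n = if n ≤ a then a - n else a := by
  split_ifs with h1
  · rw [Nat.mod_eq_sub_mod h1, Nat.mod_eq_of_lt (by omega)]
  · exact Nat.mod_eq_of_lt (by omega)

lemma inv1 {n i j : ℕ} (hi : i < n) (hj : j < n) : (i + (j + n - i) % n) % n = j := by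
  rw [mod_small (show j + n - i < 2*n by omega)]
  split_ifs with hc
  · rw [show i + (j + n - i - n) = j by omega, Nat.mod_eq_of_lt hj]
  · rw [show i + (j + n - i) = j + n by omega, Nat.add_mod_right, Nat.mod_eq_of_lt hj]

lemma inv2 {n i t : ℕ} (hi : i < n) (ht : t < n) : ((i + t) % n + n - i) % n = t := by
  rw [mod_small (show i + t < 2*n by omega)]
  split_ifs with hc
  · rw [show i + t - n + n - i = t by omega, Nat.mod_eq_of_lt ht]
  · rw [show i + t + n - i = t + n by omega, Nat.add_mod_right, Nat.mod_eq_of_lt ht]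

lemma inv3 {n i j : ℕ} (hi : i < n) (hj : j < n) : (j + n - (j + n - i) % n) % n = i := by
  rw [mod_small (show j + n - i < 2*n by omega)]
  split_ifs with hc
  · rw [show j + n - (j + n - i - n) = i + n by omega, Nat.add_mod_right, Nat.mod_eq_of_lt hi]
  · rw [show j + n - (j + n - i) = i by omega, Nat.mod_eq_of_lt hi]

lemma modstep {n a : ℕ} (hn : 2 ≤ n) : (a % n + 1) % n = (a + 1) % n := by
  have h1 : (a + 1) % n = (a % n + 1 % n) % n := Nat.add_mod a 1 n
  rw [h1, Nat.mod_eq_of_lt (show (1:ℕ) < n by omega)]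

lemma succ_mod_inj {n i i' : ℕ} (hi : i < n) (hi' : i' < n)
    (h : (i+1) % n = (i'+1) % n) : i = i' := by
  rw [mod_small (show i+1 < 2*n by omega), mod_small (show i'+1 < 2*n by omega)] at h
  split_ifs at h <;> omega

lemma divmod_unique {n a b i j : ℕ} (hi : i < n) (hj : j < n) (h : a*n + i = b*n + j) :
    a = b ∧ i = j := by
  rcases Nat.lt_trichotomy a b with hab | hab | hab
  · exfalso
    have h2 : (a+1) * n ≤ b * n := Nat.mul_le_mul_right _ (by omega)
    have h3 : (a+1) * n = a*n + n := by ring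
    omega
  · subst hab; omega
  · exfalso
    have h2 : (b+1) * n ≤ a * n := Nat.mul_le_mul_right _ (by omega)
    have h3 : (b+1) * n = b*n + n := by ring
    omega

lemma sum_pairs (f : ℕ → ℕ) (c : ℕ) :
    ∑ x ∈ Finset.range (2*c), f x = ∑ r ∈ Finset.range c, (f (2*r) + f (2*r+1)) := by
  induction c with
  | zero => simp
  | succ c ih =>
    have h2 : 2*(c+1) = (2*c+1)+1 := by ring
    rw [h2, Finset.sum_range_succ, Finset.sum_range_succ, ih, Finset.sum_range_succ]
    omega

section
variable {n m h D M : ℕ}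

lemma duo_bound (hM : M = 2*D*n) {s : ℕ} (h1 : s < 2*D) :
    (s/2)*n + n ≤ D*n ∧ M = 2*(D*n) := by
  constructor
  · calc (s/2)*n + n = (s/2+1)*n := by ring
      _ ≤ D*n := Nat.mul_le_mul_right _ (by omega)
  · rw [hM]; ring

lemma Xraw_le (hm : n = 2*m) (hm1 : 1 ≤ m) (hM : M = 2*D*n)
    (hD : h = 2*D ∨ h = 2*D + 3) {i s : ℕ} (hi : i < n) (hs : s < h) :
    Xraw n m D M i s ≤ 2*h*n - 1 ∧ 1 ≤ 2*h*n := by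
  have hMe : M = 2*(D*n) := by rw [hM]; ring
  have hhn : 2*D*n ≤ h*n := Nat.mul_le_mul_right _ (by omega)
  have hhn2 : 2*D*n = 2*(D*n) := by ring
  unfold Xraw
  rcases hD with hD' | hD'
  · subst hD'
    have h1 : s < 2*D := by omega
    obtain ⟨b1, _⟩ := duo_bound hM h1
    rw [if_pos h1]
    have hn1 : 1 ≤ n := by omega
    have hDn : 1 ≤ D*n := by
      rcases Nat.eq_zero_or_pos (D*n) with h0 | h0
      · exfalso; omega
      · omega
    have e2 : 2*(2*D)*n = 4*(D*n) := by ring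
    split_ifs <;> omega
  · subst hD'
    have e2 : 2*(2*D+3)*n = 4*(D*n) + 6*n := by ring
    by_cases h1 : s < 2*D
    · obtain ⟨b1, _⟩ := duo_bound hM h1
      rw [if_pos h1]
      split_ifs <;> omega
    · rw [if_neg h1]
      split_ifs <;> omega

lemma Xraw_inj (hm : n = 2*m) (hm1 : 1 ≤ m) (hM : M = 2*D*n)
    (hD : h = 2*D ∨ h = 2*D + 3) {i i' s s' : ℕ}
    (hi : i < n) (hi' : i' < n) (hs : s < h) (hs' : s' < h)
    (he : Xraw n m D M i s = Xraw n m D M i' s') : i = i' ∧ s = s' := by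
  have hMe : M = 2*(D*n) := by rw [hM]; ring
  unfold Xraw at he
  by_cases h1 : s < 2*D <;> by_cases h2 : s' < 2*D
  · obtain ⟨b1, _⟩ := duo_bound hM h1
    obtain ⟨b2, _⟩ := duo_bound hM h2
    rw [if_pos h1, if_pos h2] at he
    by_cases p1 : s % 2 = 0 <;> by_cases p2 : s' % 2 = 0
    · rw [if_pos p1, if_pos p2] at he
      obtain ⟨e1, e2⟩ := divmod_unique hi hi' he
      omega
    · rw [if_pos p1, if_neg p2] at he
      exfalso; omega
    · rw [if_neg p1, if_pos p2] at he
      exfalso; omega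
    · rw [if_neg p1, if_neg p2] at he
      have he' : (s/2)*n + i = (s'/2)*n + i' := by omega
      obtain ⟨e1, e2⟩ := divmod_unique hi hi' he'
      omega
  · exfalso
    obtain ⟨b1, _⟩ := duo_bound hM h1
    rw [if_pos h1, if_neg h2] at he
    split_ifs at he <;> omega
  · exfalso
    obtain ⟨b2, _⟩ := duo_bound hM h2
    rw [if_neg h1, if_pos h2] at he
    split_ifs at he <;> omega
  · rcases hD with hD' | hD'
    · exfalso; omega
    · rw [if_neg h1, if_neg h2] at he
      split_ifs at he <;> omega

lemma Xraw_nosum (hm : n = 2*m) (hm1 : 1 ≤ m) (hM : M = 2*D*n)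
    (hD : h = 2*D ∨ h = 2*D + 3) {i i' s s' : ℕ}
    (hi : i < n) (hi' : i' < n) (hs : s < h) (hs' : s' < h) :
    Xraw n m D M i s + Xraw n m D M i' s' ≠ 2*h*n - 1 := by
  have hMe : M = 2*(D*n) := by rw [hM]; ring
  have hn1 : 1 ≤ n := by omega
  unfold Xraw
  rcases hD with hD' | hD'
  · subst hD'
    have h1 : s < 2*D := by omega
    have h2 : s' < 2*D := by omega
    obtain ⟨b1, _⟩ := duo_bound hM h1
    obtain ⟨b2, _⟩ := duo_bound hM h2
    have e2 : 2*(2*D)*n = 4*(D*n) := by ring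
    rw [if_pos h1, if_pos h2]
    split_ifs <;> omega
  · subst hD'
    have e2 : 2*(2*D+3)*n = 4*(D*n) + 6*n := by ring
    by_cases h1 : s < 2*D <;> by_cases h2 : s' < 2*D
    · obtain ⟨b1, _⟩ := duo_bound hM h1
      obtain ⟨b2, _⟩ := duo_bound hM h2
      rw [if_pos h1, if_pos h2]
      split_ifs <;> omega
    · obtain ⟨b1, _⟩ := duo_bound hM h1
      rw [if_pos h1, if_neg h2]
      split_ifs <;> omega
    · obtain ⟨b2, _⟩ := duo_bound hM h2
      rw [if_neg h1, if_pos h2]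
      split_ifs <;> omega
    · rw [if_neg h1, if_neg h2]
      split_ifs <;> omega

lemma duo_pair (hn1 : 1 ≤ n) (hM : M = 2*D*n) {r i : ℕ} (hr : r < D) (hi : i < n) :
    Xraw n m D M i (2*r) + Xraw n m D M i (2*r+1) = M - 1 := by
  have hMe : M = 2*(D*n) := by rw [hM]; ring
  have b : r*n + n ≤ D*n := by
    calc r*n + n = (r+1)*n := by ring
      _ ≤ D*n := Nat.mul_le_mul_right _ (by omega)
  unfold Xraw
  have c1 : 2*r < 2*D := by omega
  have c2 : 2*r+1 < 2*D := by omega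
  rw [if_pos c1, if_pos c2, if_pos (by omega : (2*r) % 2 = 0),
    if_neg (by omega : ¬((2*r+1) % 2 = 0))]
  have d1 : (2*r)/2 = r := by omega
  have d2 : (2*r+1)/2 = r := by omega
  rw [d1, d2]
  omega

lemma Xraw_rowsum (hm : n = 2*m) (hm1 : 1 ≤ m) (hM : M = 2*D*n)
    (hD : h = 2*D ∨ h = 2*D + 3) {i : ℕ} (hi : i < n) :
    ∑ s ∈ Finset.range h, Xraw n m D M i s
      = D*(M-1) + (if h = 2*D then 0 else 3*M + 20*m - 2) := by
  have hn1 : 1 ≤ n := by omega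
  have hduo : ∑ s ∈ Finset.range (2*D), Xraw n m D M i s = D*(M-1) := by
    rw [sum_pairs]
    rw [Finset.sum_congr rfl (fun r hr => duo_pair hn1 hM (Finset.mem_range.mp hr) hi)]
    rw [Finset.sum_const, Finset.card_range, smul_eq_mul]
  rcases hD with hD' | hD'
  · subst hD'; rw [if_pos rfl, hduo]; omega
  · subst hD'
    rw [if_neg (by omega)]
    have e1 : 2*D+3 = (2*D+2)+1 := rfl
    have e2 : 2*D+2 = (2*D+1)+1 := rfl
    have e3 : 2*D+1 = (2*D)+1 := rfl
    rw [e1, Finset.sum_range_succ, e2, Finset.sum_range_succ, e3, Finset.sum_range_succ,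
      hduo]
    have v1 : Xraw n m D M i (2*D) = if i < m then M + 3*m + i else M + 2*m + (i-m) := by
      unfold Xraw
      rw [if_neg (by omega)]
      split_ifs <;> omega
    have v2 : Xraw n m D M i (2*D+1)
        = if i < m then M + 6*m - 2 - 2*i else M + 8*m - 2 - 2*(i-m) := by
      unfold Xraw
      rw [if_neg (by omega)]
      split_ifs <;> omega
    have v3 : Xraw n m D M i (2*D+2)
        = if i < m then M + 11*m + i else M + 10*m + (i-m) := by
      unfold Xraw
      rw [if_neg (by omega)]
      split_ifs <;> omega
    rw [v1, v2, v3]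
    split_ifs <;> omega

end

section
variable {n k : ℕ}

lemma DD_cases (hk2 : k % 2 = 0) (hk4 : 4 ≤ k) : k/2 = 2 * DD k ∨ k/2 = 2 * DD k + 3 := by
  unfold DD
  split_ifs with hp
  · left; omega
  · right; omega

lemma Xf_le (hn2 : n % 2 = 0) (hk2 : k % 2 = 0) (hk4 : 4 ≤ k) (hkn : k ≤ n)
    {i s : ℕ} (hi : i < n) (hs : s < k/2) : Xf n k i s ≤ k*n - 1 ∧ 1 ≤ k*n := by
  have h0 := Xraw_le (show n = 2*(n/2) by omega) (show 1 ≤ n/2 by omega)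
    (rfl : 2 * DD k * n = 2 * DD k * n) (DD_cases hk2 hk4) hi hs
  have heq : 2*(k/2)*n = k*n := by
    have e : 2*(k/2) = k := by omega
    rw [e]
  rw [heq] at h0
  exact h0

lemma Xf_inj (hn2 : n % 2 = 0) (hk2 : k % 2 = 0) (hk4 : 4 ≤ k) (hkn : k ≤ n)
    {i i' s s' : ℕ} (hi : i < n) (hi' : i' < n) (hs : s < k/2) (hs' : s' < k/2)
    (he : Xf n k i s = Xf n k i' s') : i = i' ∧ s = s' :=
  Xraw_inj (show n = 2*(n/2) by omega) (show 1 ≤ n/2 by omega) rfl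
    (DD_cases hk2 hk4) hi hi' hs hs' he

lemma Xf_nosum (hn2 : n % 2 = 0) (hk2 : k % 2 = 0) (hk4 : 4 ≤ k) (hkn : k ≤ n)
    {i i' s s' : ℕ} (hi : i < n) (hi' : i' < n) (hs : s < k/2) (hs' : s' < k/2) :
    Xf n k i s + Xf n k i' s' ≠ k*n - 1 := by
  have h0 := Xraw_nosum (show n = 2*(n/2) by omega) (show 1 ≤ n/2 by omega)
    (rfl : 2 * DD k * n = 2 * DD k * n) (DD_cases hk2 hk4) hi hi' hs hs'
  have heq : 2*(k/2)*n = k*n := by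
    have e : 2*(k/2) = k := by omega
    rw [e]
  rw [heq] at h0
  exact h0

lemma Xf_rowsum_const (hn2 : n % 2 = 0) (hk2 : k % 2 = 0) (hk4 : 4 ≤ k) (hkn : k ≤ n)
    {i i' : ℕ} (hi : i < n) (hi' : i' < n) :
    ∑ s ∈ Finset.range (k/2), Xf n k i s = ∑ s ∈ Finset.range (k/2), Xf n k i' s := by
  simp only [Xf]
  rw [Xraw_rowsum (show n = 2*(n/2) by omega) (show 1 ≤ n/2 by omega) rfl
      (DD_cases hk2 hk4) hi,
    Xraw_rowsum (show n = 2*(n/2) by omega) (show 1 ≤ n/2 by omega) rfl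
      (DD_cases hk2 hk4) hi']

lemma Wf_lt (hn2 : n % 2 = 0) (hk2 : k % 2 = 0) (hk4 : 4 ≤ k) (hkn : k ≤ n)
    {i t : ℕ} (hi : i < n) (ht : t < k) : Wf n k i t < k*n := by
  have hs : t/2 < k/2 := by omega
  have hn0 : 0 < n := by omega
  unfold Wf
  split_ifs with hp
  · have := Xf_le hn2 hk2 hk4 hkn hi hs
    omega
  · have := Xf_le hn2 hk2 hk4 hkn (Nat.mod_lt (i+1) hn0) hs
    omega

lemma Wf_inj (hn2 : n % 2 = 0) (hk2 : k % 2 = 0) (hk4 : 4 ≤ k) (hkn : k ≤ n)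
    {i i' t t' : ℕ} (hi : i < n) (hi' : i' < n) (ht : t < k) (ht' : t' < k)
    (he : Wf n k i t = Wf n k i' t') : i = i' ∧ t = t' := by
  have hs : t/2 < k/2 := by omega
  have hs' : t'/2 < k/2 := by omega
  have hn0 : 0 < n := by omega
  have hmi : (i+1) % n < n := Nat.mod_lt (i+1) hn0
  have hmi' : (i'+1) % n < n := Nat.mod_lt (i'+1) hn0
  unfold Wf at he
  split_ifs at he with p1 p2 p2
  · have := Xf_inj hn2 hk2 hk4 hkn hi hi' hs hs' he
    omega
  · exfalso
    have b2 := Xf_le hn2 hk2 hk4 hkn hmi' hs'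
    exact Xf_nosum hn2 hk2 hk4 hkn hi hmi' hs hs' (by omega)
  · exfalso
    have b1 := Xf_le hn2 hk2 hk4 hkn hmi hs
    exact Xf_nosum hn2 hk2 hk4 hkn hi' hmi hs' hs (by omega)
  · have b1 := Xf_le hn2 hk2 hk4 hkn hmi hs
    have b2 := Xf_le hn2 hk2 hk4 hkn hmi' hs'
    have he' : Xf n k ((i+1) % n) (t/2) = Xf n k ((i'+1) % n) (t'/2) := by omega
    have hr := Xf_inj hn2 hk2 hk4 hkn hmi hmi' hs hs' he'
    have := succ_mod_inj hi hi' hr.1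
    omega

lemma range_two_half (hk2 : k % 2 = 0) : Finset.range k = Finset.range (2*(k/2)) := by
  congr 1
  omega

lemma Wf_rowsum (hn2 : n % 2 = 0) (hk2 : k % 2 = 0) (hk4 : 4 ≤ k) (hkn : k ≤ n)
    {i : ℕ} (hi : i < n) :
    ∑ t ∈ Finset.range k, Wf n k i t = (k/2)*(k*n-1) := by
  have hn0 : 0 < n := by omega
  have hmi : (i+1) % n < n := Nat.mod_lt (i+1) hn0
  rw [range_two_half hk2, sum_pairs]
  have pairval : ∀ s ∈ Finset.range (k/2),
      Wf n k i (2*s) + Wf n k i (2*s+1)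
        = Xf n k i s + (k*n - 1 - Xf n k ((i+1) % n) s) := by
    intro s hs
    unfold Wf
    rw [if_pos (by omega : (2*s) % 2 = 0), if_neg (by omega : ¬((2*s+1) % 2 = 0)),
      (by omega : (2*s)/2 = s), (by omega : (2*s+1)/2 = s)]
  rw [Finset.sum_congr rfl pairval, Finset.sum_add_distrib,
    Finset.sum_tsub_distrib _ (fun s hs =>
      (Xf_le hn2 hk2 hk4 hkn hmi (Finset.mem_range.mp hs)).1),
    Finset.sum_const, Finset.card_range, smul_eq_mul]
  have hGA := Xf_rowsum_const hn2 hk2 hk4 hkn hi hmi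
  have hGB : ∑ s ∈ Finset.range (k/2), Xf n k ((i+1) % n) s ≤ (k/2)*(k*n-1) := by
    calc ∑ s ∈ Finset.range (k/2), Xf n k ((i+1) % n) s
        ≤ ∑ _s ∈ Finset.range (k/2), (k*n-1) :=
          Finset.sum_le_sum (fun s hs =>
            (Xf_le hn2 hk2 hk4 hkn hmi (Finset.mem_range.mp hs)).1)
      _ = (k/2)*(k*n-1) := by rw [Finset.sum_const, Finset.card_range, smul_eq_mul]
  omega

lemma Wf_colsum (hn2 : n % 2 = 0) (hk2 : k % 2 = 0) (hk4 : 4 ≤ k) (hkn : k ≤ n)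
    {j : ℕ} (hj : j < n) :
    ∑ t ∈ Finset.range k, Wf n k ((j + n - t) % n) t = (k/2)*(k*n-1) := by
  have hn0 : 0 < n := by omega
  rw [range_two_half hk2, sum_pairs]
  have pairval : ∀ s ∈ Finset.range (k/2),
      Wf n k ((j + n - 2*s) % n) (2*s) + Wf n k ((j + n - (2*s+1)) % n) (2*s+1)
        = k*n - 1 := by
    intro s hs
    have hsk : s < k/2 := Finset.mem_range.mp hs
    unfold Wf
    rw [if_pos (by omega : (2*s) % 2 = 0), if_neg (by omega : ¬((2*s+1) % 2 = 0)),
      (by omega : (2*s)/2 = s), (by omega : (2*s+1)/2 = s)]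
    have hstep : ((j + n - (2*s+1)) % n + 1) % n = (j + n - 2*s) % n := by
      rw [modstep (by omega : 2 ≤ n)]
      congr 1
      omega
    rw [hstep]
    have hb := Xf_le hn2 hk2 hk4 hkn (Nat.mod_lt (j + n - 2*s) hn0) hsk
    omega
  rw [Finset.sum_congr rfl pairval, Finset.sum_const, Finset.card_range, smul_eq_mul]

end

/-- The diagonal magic square. -/
def Mg (n k : ℕ) : Fin n → Fin n → Option ℕ := fun i j =>
  if ((j:ℕ) + n - (i:ℕ)) % n < k then
    some (Wf n k (i:ℕ) (((j:ℕ) + n - (i:ℕ)) % n))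
  else none

end DiagMagicAux

open DiagMagicAux in
theorem main_construction (n k : ℕ) (hn2 : n % 2 = 0) (hk2 : k % 2 = 0)
    (hk : 4 ≤ k) (hkn : k ≤ n) :
    (∀ e < k * n, ∃! p : Fin n × Fin n, Mg n k p.1 p.2 = some e) ∧
    (∀ i j : Fin n, ∀ e, Mg n k i j = some e → e < k * n) ∧
    (∀ i : Fin n, (Finset.univ.filter fun j => (Mg n k i j).isSome).card = k) ∧
    (∀ j : Fin n, (Finset.univ.filter fun i => (Mg n k i j).isSome).card = k) ∧
    (∀ i : Fin n, ∑ j, (Mg n k i j).getD 0 = (k/2)*(k*n-1)) ∧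
    (∀ j : Fin n, ∑ i, (Mg n k i j).getD 0 = (k/2)*(k*n-1)) := by
  have hn0 : 0 < n := by omega
  refine ⟨?_, ?_, ?_, ?_, ?_, ?_⟩
  · -- unique occurrence of each entry
    intro e he
    have hinj : Set.InjOn (fun p : ℕ × ℕ => Wf n k p.1 p.2)
        ↑((Finset.range n) ×ˢ (Finset.range k)) := by
      rintro ⟨a, b⟩ hp ⟨c, d⟩ hq hpq
      rw [Finset.mem_coe, Finset.mem_product, Finset.mem_range, Finset.mem_range] at hp hq
      have := Wf_inj hn2 hk2 hk hkn hp.1 hq.1 hp.2 hq.2 hpq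
      simp only [Prod.mk.injEq]
      exact this
    have himg : ((Finset.range n) ×ˢ (Finset.range k)).image (fun p => Wf n k p.1 p.2)
        = Finset.range (k*n) := by
      apply Finset.eq_of_subset_of_card_le
      · intro x hx
        obtain ⟨p, hp, rfl⟩ := Finset.mem_image.mp hx
        rw [Finset.mem_product, Finset.mem_range, Finset.mem_range] at hp
        exact Finset.mem_range.mpr (Wf_lt hn2 hk2 hk hkn hp.1 hp.2)
      · rw [Finset.card_range, Finset.card_image_of_injOn hinj, Finset.card_product,
          Finset.card_range, Finset.card_range]
        exact le_of_eq (Nat.mul_comm k n)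
    obtain ⟨p0, hp0, hp0e⟩ := Finset.mem_image.mp (himg ▸ Finset.mem_range.mpr he)
    obtain ⟨i0, t0⟩ := p0
    rw [Finset.mem_product, Finset.mem_range, Finset.mem_range] at hp0
    obtain ⟨hi0, ht0⟩ := hp0
    simp only at hp0e hi0 ht0
    refine ⟨(⟨i0, hi0⟩, ⟨(i0 + t0) % n, Nat.mod_lt _ hn0⟩), ?_, ?_⟩
    · show Mg n k _ _ = some e
      unfold Mg
      have hcond : (((i0 + t0) % n) + n - i0) % n = t0 := inv2 hi0 (lt_of_lt_of_le ht0 hkn)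
      simp only
      rw [hcond, if_pos ht0]
      exact congrArg some hp0e
    · rintro ⟨⟨i', hi'⟩, ⟨j', hj'⟩⟩ hq
      unfold Mg at hq
      simp only at hq
      by_cases hc : (j' + n - i') % n < k
      · rw [if_pos hc] at hq
        have heW : Wf n k i' ((j' + n - i') % n) = Wf n k i0 t0 :=
          (Option.some.inj hq).trans hp0e.symm
        obtain ⟨hii, htt⟩ := Wf_inj hn2 hk2 hk hkn hi' hi0 hc ht0 heW
        have h1 := inv1 hi' hj'
        rw [htt, hii] at h1
        simp only [Prod.mk.injEq, Fin.mk.injEq]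
        exact ⟨hii, h1.symm⟩
      · rw [if_neg hc] at hq
        exact absurd hq (by simp)
  · -- entries bounded
    intro i j e hsome
    unfold Mg at hsome
    by_cases hc : ((j:ℕ) + n - (i:ℕ)) % n < k
    · rw [if_pos hc] at hsome
      have := Option.some.inj hsome
      subst this
      exact Wf_lt hn2 hk2 hk hkn i.isLt hc
    · rw [if_neg hc] at hsome
      exact absurd hsome (by simp)
  · -- row counts
    intro i
    have hfe : (Finset.univ.filter fun j : Fin n => (Mg n k i j).isSome)
        = Finset.univ.filter (fun j : Fin n => ((j:ℕ) + n - (i:ℕ)) % n < k) := by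
      apply Finset.filter_congr
      intro j _
      unfold Mg
      split_ifs with hc <;> simp [hc]
    rw [hfe]
    refine (Finset.card_bij'
      (fun (a : Fin n) (_ : a ∈ Finset.univ.filter
        (fun j : Fin n => ((j:ℕ) + n - (i:ℕ)) % n < k)) => ((a:ℕ) + n - (i:ℕ)) % n)
      (fun t (_ : t ∈ Finset.range k) => (⟨((i:ℕ) + t) % n, Nat.mod_lt _ hn0⟩ : Fin n))
      ?_ ?_ ?_ ?_).trans (Finset.card_range k)
    · intro a ha
      rw [Finset.mem_filter] at ha
      exact Finset.mem_range.mpr ha.2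
    · intro t ht
      rw [Finset.mem_filter]
      refine ⟨Finset.mem_univ _, ?_⟩
      show ((((i:ℕ) + t) % n) + n - (i:ℕ)) % n < k
      rw [inv2 i.isLt (lt_of_lt_of_le (Finset.mem_range.mp ht) hkn)]
      exact Finset.mem_range.mp ht
    · intro a ha
      exact Fin.ext (inv1 i.isLt a.isLt)
    · intro t ht
      show ((((i:ℕ) + t) % n) + n - (i:ℕ)) % n = t
      exact inv2 i.isLt (lt_of_lt_of_le (Finset.mem_range.mp ht) hkn)
  · -- column counts
    intro j
    have hfe : (Finset.univ.filter fun i : Fin n => (Mg n k i j).isSome)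
        = Finset.univ.filter (fun i : Fin n => ((j:ℕ) + n - (i:ℕ)) % n < k) := by
      apply Finset.filter_congr
      intro i _
      unfold Mg
      split_ifs with hc <;> simp [hc]
    rw [hfe]
    refine (Finset.card_bij'
      (fun (a : Fin n) (_ : a ∈ Finset.univ.filter
        (fun i : Fin n => ((j:ℕ) + n - (i:ℕ)) % n < k)) => ((j:ℕ) + n - (a:ℕ)) % n)
      (fun t (_ : t ∈ Finset.range k) => (⟨((j:ℕ) + n - t) % n, Nat.mod_lt _ hn0⟩ : Fin n))
      ?_ ?_ ?_ ?_).trans (Finset.card_range k)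
    · intro a ha
      rw [Finset.mem_filter] at ha
      exact Finset.mem_range.mpr ha.2
    · intro t ht
      rw [Finset.mem_filter]
      refine ⟨Finset.mem_univ _, ?_⟩
      show ((j:ℕ) + n - (((j:ℕ) + n - t) % n)) % n < k
      rw [inv3 (lt_of_lt_of_le (Finset.mem_range.mp ht) hkn) j.isLt]
      exact Finset.mem_range.mp ht
    · intro a ha
      exact Fin.ext (inv3 a.isLt j.isLt)
    · intro t ht
      show ((j:ℕ) + n - (((j:ℕ) + n - t) % n)) % n = t
      exact inv3 (lt_of_lt_of_le (Finset.mem_range.mp ht) hkn) j.isLt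
  · -- row sums
    intro i
    have hterm : ∀ j : Fin n, (Mg n k i j).getD 0
        = (if ((j:ℕ) + n - (i:ℕ)) % n < k then Wf n k (i:ℕ) (((j:ℕ) + n - (i:ℕ)) % n) else 0) := by
      intro j
      unfold Mg
      split_ifs <;> simp
    rw [Finset.sum_congr rfl (fun j _ => hterm j)]
    have hre : ∑ j : Fin n,
        (if ((j:ℕ) + n - (i:ℕ)) % n < k then Wf n k (i:ℕ) (((j:ℕ) + n - (i:ℕ)) % n) else 0)
        = ∑ t ∈ Finset.range n, (if t < k then Wf n k (i:ℕ) t else 0) := by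
      refine Finset.sum_bij'
        (fun (a : Fin n) (_ : a ∈ Finset.univ) => ((a:ℕ) + n - (i:ℕ)) % n)
        (fun t (_ : t ∈ Finset.range n) => (⟨((i:ℕ) + t) % n, Nat.mod_lt _ hn0⟩ : Fin n))
        (fun a _ => Finset.mem_range.mpr (Nat.mod_lt _ hn0))
        (fun t _ => Finset.mem_univ _)
        (fun a _ => Fin.ext (inv1 i.isLt a.isLt))
        (fun t ht => ?_) (fun a _ => rfl)
      show ((((i:ℕ) + t) % n) + n - (i:ℕ)) % n = t
      exact inv2 i.isLt (Finset.mem_range.mp ht)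
    rw [hre, ← Finset.sum_filter]
    rw [show Finset.filter (fun t => t < k) (Finset.range n) = Finset.range k by
      ext t; simp only [Finset.mem_filter, Finset.mem_range]; omega]
    exact Wf_rowsum hn2 hk2 hk hkn i.isLt
  · -- column sums
    intro j
    have hterm : ∀ i : Fin n, (Mg n k i j).getD 0
        = (if ((j:ℕ) + n - (i:ℕ)) % n < k then Wf n k (i:ℕ) (((j:ℕ) + n - (i:ℕ)) % n) else 0) := by
      intro i
      unfold Mg
      split_ifs <;> simp
    rw [Finset.sum_congr rfl (fun i _ => hterm i)]
    have hre : ∑ i : Fin n,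
        (if ((j:ℕ) + n - (i:ℕ)) % n < k then Wf n k (i:ℕ) (((j:ℕ) + n - (i:ℕ)) % n) else 0)
        = ∑ t ∈ Finset.range n, (if t < k then Wf n k (((j:ℕ) + n - t) % n) t else 0) := by
      refine Finset.sum_bij'
        (fun (a : Fin n) (_ : a ∈ Finset.univ) => ((j:ℕ) + n - (a:ℕ)) % n)
        (fun t (_ : t ∈ Finset.range n) => (⟨((j:ℕ) + n - t) % n, Nat.mod_lt _ hn0⟩ : Fin n))
        (fun a _ => Finset.mem_range.mpr (Nat.mod_lt _ hn0))
        (fun t _ => Finset.mem_univ _)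
        (fun a _ => Fin.ext (inv3 a.isLt j.isLt))
        (fun t ht => ?_) (fun a _ => ?_)
      · show ((j:ℕ) + n - (((j:ℕ) + n - t) % n)) % n = t
        exact inv3 (Finset.mem_range.mp ht) j.isLt
      · show (if ((j:ℕ) + n - (a:ℕ)) % n < k then Wf n k (a:ℕ) (((j:ℕ) + n - (a:ℕ)) % n) else 0)
          = (if ((j:ℕ) + n - (a:ℕ)) % n < k then
              Wf n k (((j:ℕ) + n - (((j:ℕ) + n - (a:ℕ)) % n)) % n) (((j:ℕ) + n - (a:ℕ)) % n) else 0)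
        rw [inv3 a.isLt j.isLt]
    rw [hre, ← Finset.sum_filter]
    rw [show Finset.filter (fun t => t < k) (Finset.range n) = Finset.range k by
      ext t; simp only [Finset.mem_filter, Finset.mem_range]; omega]
    exact Wf_colsum hn2 hk2 hk hkn j.isLt


theorem diagonal_magic_even_order (n k : ℕ) (hne : Even n) (hke : Even k)
    (hk : 4 ≤ k) (hkn : k ≤ n) :
    ∃ M : Fin n → Fin n → Option ℕ, IsDiagonalMagic n k M := by
  have hn2 : n % 2 = 0 := Nat.even_iff.mp hne
  have hk2 : k % 2 = 0 := Nat.even_iff.mp hke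
  obtain ⟨h1, h2, h3, h4, h5, h6⟩ := main_construction n k hn2 hk2 hk hkn
  refine ⟨DiagMagicAux.Mg n k, ⟨(k/2)*(k*n-1), h1, h2, h3, h4, h5, h6⟩, 0, ?_⟩
  intro i j hsome
  refine ⟨((j:ℕ) + n - (i:ℕ)) % n, ?_, ?_⟩
  · unfold DiagMagicAux.Mg at hsome
    by_cases hc : ((j:ℕ) + n - (i:ℕ)) % n < k
    · exact hc
    · rw [if_neg hc] at hsome
      simp at hsome
  · rw [Nat.add_zero]
    exact (DiagMagicAux.inv1 i.isLt j.isLt).symm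
end

section
/- Define a function f on {0,...,n−1} × {0,1,2,3} by f(i,1) = i, f(i,2) = 4n−i−1, f(i,3) = 3n−i−1, f(i,4) = n+i (using column index shifts d=1,2 at row i and d=1,2 at row n+i−2 mod n appropriately). Then the map sending the triple (row, diagonal) to its entry is a bijection onto {0,1,...,4n−1}, and for n ≥ 4 every row sum (sum of the 4 entries placed in that row) equals 8n−2 and every column sum equals 8n−2. -/
/-- The explicit 4-diagonal construction: entry `i` at `(i, i+1)`, entry `4n-i-1` at
`(i, i+2)`, entry `3n-i-1` at `(n+i-2, i+1)` and entry `n+i` at `(n+i-2, i+2)`,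
all indices mod `n`. -/
def fourDiagArray (n : ℕ) : Fin n → Fin n → Option ℕ := fun r c =>
  if ((r : ℕ) + 1) % n = (c : ℕ) then some (r : ℕ)
  else if ((r : ℕ) + 2) % n = (c : ℕ) then some (4 * n - (r : ℕ) - 1)
  else if ((c : ℕ) + 2 * n - 3) % n = (r : ℕ) then
    some (3 * n - (((c : ℕ) + n - 1) % n) - 1)
  else if ((c : ℕ) + 2 * n - 4) % n = (r : ℕ) then
    some (n + ((c : ℕ) + n - 2) % n)
  else none

private lemma modf {n : ℕ} (hn : 0 < n) (x : ℕ) (hx : x < 3*n) :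
    x % n < n ∧ (x % n = x ∨ x % n + n = x ∨ x % n + 2*n = x) := by
  have h := Nat.div_add_mod x n
  have hm := Nat.mod_lt x hn
  have hq : x / n < 3 := Nat.div_lt_of_lt_mul (by omega)
  refine ⟨hm, ?_⟩
  set q := x / n with hq'
  interval_cases q <;> omega


private lemma modf2 {n : ℕ} (hn : 0 < n) (x : ℕ) (hx : x < 2*n) :
    x % n < n ∧ (x % n = x ∨ x % n + n = x) := by
  have h := modf hn x (by omega)
  omega

section
variable {n : ℕ}

private lemma val1 (hn : 4 ≤ n) (r c : Fin n) (h : (c:ℕ) = ((r:ℕ)+1) % n) :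
    fourDiagArray n r c = some (r:ℕ) := by
  simp only [fourDiagArray]
  split_ifs with h1 h2 h3 h4
  · rfl
  all_goals exact absurd h.symm h1

private lemma val2 (hn : 4 ≤ n) (r c : Fin n) (h : (c:ℕ) = ((r:ℕ)+2) % n) :
    fourDiagArray n r c = some (4*n - (r:ℕ) - 1) := by
  have hr := r.isLt; have hc := c.isLt
  simp only [fourDiagArray]
  split_ifs with h1 h2 h3 h4
  · exfalso
    have f1 := modf (n:=n) (by omega) ((r:ℕ)+1) (by omega)
    have f2 := modf (n:=n) (by omega) ((r:ℕ)+2) (by omega)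
    omega
  · rfl
  all_goals exact absurd h.symm h2

private lemma val3 (hn : 4 ≤ n) (r c : Fin n) (h : (c:ℕ) = ((r:ℕ)+3) % n) :
    fourDiagArray n r c = some (3*n - (((r:ℕ)+2) % n) - 1) := by
  have hr := r.isLt; have hc := c.isLt
  have f2 := modf (n:=n) (by omega) ((r:ℕ)+2) (by omega)
  have f3 := modf (n:=n) (by omega) ((r:ℕ)+3) (by omega)
  have g1 := modf (n:=n) (by omega) ((c:ℕ)+2*n-3) (by omega)
  simp only [fourDiagArray]
  split_ifs with h1 h2 h3 h4
  · exfalso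
    have f1 := modf (n:=n) (by omega) ((r:ℕ)+1) (by omega)
    omega
  · exfalso; omega
  · refine congrArg some ?_
    have g3 := modf (n:=n) (by omega) ((c:ℕ)+n-1) (by omega)
    omega
  all_goals (exfalso; exact h3 (by omega))

private lemma val4 (hn : 4 ≤ n) (r c : Fin n) (h : (c:ℕ) = ((r:ℕ)+4) % n) :
    fourDiagArray n r c = some (n + ((r:ℕ)+2) % n) := by
  have hr := r.isLt; have hc := c.isLt
  have f2 := modf (n:=n) (by omega) ((r:ℕ)+2) (by omega)
  have f4 := modf (n:=n) (by omega) ((r:ℕ)+4) (by omega)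
  have g2 := modf (n:=n) (by omega) ((c:ℕ)+2*n-4) (by omega)
  simp only [fourDiagArray]
  split_ifs with h1 h2 h3 h4
  · exfalso
    have f1 := modf (n:=n) (by omega) ((r:ℕ)+1) (by omega)
    omega
  · exfalso; omega
  · exfalso
    have g1 := modf (n:=n) (by omega) ((c:ℕ)+2*n-3) (by omega)
    omega
  · refine congrArg some ?_
    have g4 := modf (n:=n) (by omega) ((c:ℕ)+n-2) (by omega)
    omega
  · exfalso; exact h4 (by omega)

private lemma val0 (hn : 4 ≤ n) (r c : Fin n)
    (h1 : (c:ℕ) ≠ ((r:ℕ)+1) % n) (h2 : (c:ℕ) ≠ ((r:ℕ)+2) % n)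
    (h3 : (c:ℕ) ≠ ((r:ℕ)+3) % n) (h4 : (c:ℕ) ≠ ((r:ℕ)+4) % n) :
    fourDiagArray n r c = none := by
  have hr := r.isLt; have hc := c.isLt
  simp only [fourDiagArray]
  split_ifs with h1' h2' h3' h4'
  · exact absurd h1'.symm h1
  · exact absurd h2'.symm h2
  · exfalso
    have f3 := modf (n:=n) (by omega) ((r:ℕ)+3) (by omega)
    have g1 := modf (n:=n) (by omega) ((c:ℕ)+2*n-3) (by omega)
    omega
  · exfalso
    have f4 := modf (n:=n) (by omega) ((r:ℕ)+4) (by omega)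
    have g2 := modf (n:=n) (by omega) ((c:ℕ)+2*n-4) (by omega)
    omega
  · rfl

private lemma cellCases (hn : 4 ≤ n) (r c : Fin n) (e : ℕ)
    (h : fourDiagArray n r c = some e) :
    ((c:ℕ) = ((r:ℕ)+1) % n ∧ e = (r:ℕ)) ∨
    ((c:ℕ) = ((r:ℕ)+2) % n ∧ e = 4*n - (r:ℕ) - 1) ∨
    ((c:ℕ) = ((r:ℕ)+3) % n ∧ e + ((r:ℕ)+2) % n + 1 = 3*n) ∨
    ((c:ℕ) = ((r:ℕ)+4) % n ∧ e = n + ((r:ℕ)+2) % n) := by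
  have hr := r.isLt; have hc := c.isLt
  simp only [fourDiagArray] at h
  split_ifs at h with h1 h2 h3 h4
  · exact Or.inl ⟨h1.symm, (Option.some.inj h).symm⟩
  · exact Or.inr (Or.inl ⟨h2.symm, (Option.some.inj h).symm⟩)
  · refine Or.inr (Or.inr (Or.inl ?_))
    have he := Option.some.inj h
    have f2 := modf (n:=n) (by omega) ((r:ℕ)+2) (by omega)
    have f3 := modf (n:=n) (by omega) ((r:ℕ)+3) (by omega)
    have g1 := modf (n:=n) (by omega) ((c:ℕ)+2*n-3) (by omega)
    have g3 := modf (n:=n) (by omega) ((c:ℕ)+n-1) (by omega)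
    exact ⟨by omega, by omega⟩
  · refine Or.inr (Or.inr (Or.inr ?_))
    have he := Option.some.inj h
    have f2 := modf (n:=n) (by omega) ((r:ℕ)+2) (by omega)
    have f4 := modf (n:=n) (by omega) ((r:ℕ)+4) (by omega)
    have g2 := modf (n:=n) (by omega) ((c:ℕ)+2*n-4) (by omega)
    have g4 := modf (n:=n) (by omega) ((c:ℕ)+n-2) (by omega)
    exact ⟨by omega, by omega⟩


private lemma exu (hn : 4 ≤ n) (e : ℕ) (he : e < 4*n) :
    ∃! p : Fin n × Fin n, fourDiagArray n p.1 p.2 = some e := by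
  have hn0 : 0 < n := by omega
  rcases (show e < n ∨ (n ≤ e ∧ e < 2*n) ∨ (2*n ≤ e ∧ e < 3*n) ∨ 3*n ≤ e by omega)
    with hA | hB | hC | hD
  · refine ⟨(⟨e, by omega⟩, ⟨(e+1) % n, Nat.mod_lt _ hn0⟩), val1 hn _ _ rfl, ?_⟩
    rintro ⟨r, c⟩ hq
    have hr := r.isLt; have hc := c.isLt
    have f1 := modf (n:=n) hn0 ((r:ℕ)+1) (by omega)
    have f2 := modf (n:=n) hn0 ((r:ℕ)+2) (by omega)
    have fe := modf (n:=n) hn0 (e+1) (by omega)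
    rcases cellCases hn r c e hq with ⟨h1, h2⟩ | ⟨h1, h2⟩ | ⟨h1, h2⟩ | ⟨h1, h2⟩ <;>
      simp only [Prod.mk.injEq, Fin.ext_iff] <;> omega
  · have f1 := modf (n:=n) hn0 (e-2) (by omega)
    have f2 := modf (n:=n) hn0 ((e-2)%n + 2) (by omega)
    have f3 := modf (n:=n) hn0 ((e-2)%n + 4) (by omega)
    have f4 := modf (n:=n) hn0 (e+2) (by omega)
    refine ⟨(⟨(e-2)%n, f1.1⟩, ⟨(e+2)%n, f4.1⟩), ?_, ?_⟩
    · have := val4 hn (⟨(e-2)%n, f1.1⟩ : Fin n) (⟨(e+2)%n, f4.1⟩ : Fin n)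
        (show (e+2)%n = ((e-2)%n + 4) % n by omega)
      exact this.trans (congrArg some (show n + ((e-2)%n + 2) % n = e by omega))
    · rintro ⟨r, c⟩ hq
      have hr := r.isLt; have hc := c.isLt
      have k2 := modf (n:=n) hn0 ((r:ℕ)+2) (by omega)
      have k4 := modf (n:=n) hn0 ((r:ℕ)+4) (by omega)
      rcases cellCases hn r c e hq with ⟨h1, h2⟩ | ⟨h1, h2⟩ | ⟨h1, h2⟩ | ⟨h1, h2⟩ <;>
        simp only [Prod.mk.injEq, Fin.ext_iff] <;> omega
  · have f1 := modf (n:=n) hn0 (4*n-3-e) (by omega)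
    have f2 := modf (n:=n) hn0 ((4*n-3-e)%n + 2) (by omega)
    have f3 := modf (n:=n) hn0 ((4*n-3-e)%n + 3) (by omega)
    have f4 := modf (n:=n) hn0 (4*n-e) (by omega)
    refine ⟨(⟨(4*n-3-e)%n, f1.1⟩, ⟨(4*n-e)%n, f4.1⟩), ?_, ?_⟩
    · have := val3 hn (⟨(4*n-3-e)%n, f1.1⟩ : Fin n) (⟨(4*n-e)%n, f4.1⟩ : Fin n)
        (show (4*n-e)%n = ((4*n-3-e)%n + 3) % n by omega)
      exact this.trans (congrArg some
        (show 3*n - (((4*n-3-e)%n + 2) % n) - 1 = e by omega))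
    · rintro ⟨r, c⟩ hq
      have hr := r.isLt; have hc := c.isLt
      have k2 := modf (n:=n) hn0 ((r:ℕ)+2) (by omega)
      have k3 := modf (n:=n) hn0 ((r:ℕ)+3) (by omega)
      rcases cellCases hn r c e hq with ⟨h1, h2⟩ | ⟨h1, h2⟩ | ⟨h1, h2⟩ | ⟨h1, h2⟩ <;>
        simp only [Prod.mk.injEq, Fin.ext_iff] <;> omega
  · have f2 := modf (n:=n) hn0 ((4*n-1-e) + 2) (by omega)
    refine ⟨(⟨4*n-1-e, by omega⟩, ⟨((4*n-1-e)+2)%n, f2.1⟩), ?_, ?_⟩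
    · have := val2 hn (⟨4*n-1-e, by omega⟩ : Fin n) (⟨((4*n-1-e)+2)%n, f2.1⟩ : Fin n) rfl
      exact this.trans (congrArg some (show 4*n - (4*n-1-e) - 1 = e by omega))
    · rintro ⟨r, c⟩ hq
      have hr := r.isLt; have hc := c.isLt
      have k2 := modf (n:=n) hn0 ((r:ℕ)+2) (by omega)
      rcases cellCases hn r c e hq with ⟨h1, h2⟩ | ⟨h1, h2⟩ | ⟨h1, h2⟩ | ⟨h1, h2⟩ <;>
        simp only [Prod.mk.injEq, Fin.ext_iff] <;> omega

set_option maxHeartbeats 1000000 in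
private lemma rowSum (hn : 4 ≤ n) (i : Fin n) :
    ∑ j, (fourDiagArray n i j).getD 0 = 8*n - 2 := by
  have hi := i.isLt
  have hn0 : 0 < n := by omega
  have f1 := modf2 (n:=n) hn0 ((i:ℕ)+1) (by omega)
  have f2 := modf2 (n:=n) hn0 ((i:ℕ)+2) (by omega)
  have f3 := modf2 (n:=n) hn0 ((i:ℕ)+3) (by omega)
  have f4 := modf2 (n:=n) hn0 ((i:ℕ)+4) (by omega)
  set c1 : Fin n := ⟨((i:ℕ)+1) % n, f1.1⟩ with hc1
  set c2 : Fin n := ⟨((i:ℕ)+2) % n, f2.1⟩ with hc2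
  set c3 : Fin n := ⟨((i:ℕ)+3) % n, f3.1⟩ with hc3
  set c4 : Fin n := ⟨((i:ℕ)+4) % n, f4.1⟩ with hc4
  have d12 : c1 ≠ c2 := by simp only [hc1, hc2, ne_eq, Fin.mk.injEq]; omega
  have d13 : c1 ≠ c3 := by simp only [hc1, hc3, ne_eq, Fin.mk.injEq]; omega
  have d14 : c1 ≠ c4 := by simp only [hc1, hc4, ne_eq, Fin.mk.injEq]; omega
  have d23 : c2 ≠ c3 := by simp only [hc2, hc3, ne_eq, Fin.mk.injEq]; omega
  have d24 : c2 ≠ c4 := by simp only [hc2, hc4, ne_eq, Fin.mk.injEq]; omega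
  have d34 : c3 ≠ c4 := by simp only [hc3, hc4, ne_eq, Fin.mk.injEq]; omega
  have key : ∀ j : Fin n, j ∉ ({c1, c2, c3, c4} : Finset (Fin n)) →
      (fourDiagArray n i j).getD 0 = 0 := by
    intro j hj
    simp only [Finset.mem_insert, Finset.mem_singleton, not_or, hc1, hc2, hc3, hc4,
      Fin.ext_iff] at hj
    rw [val0 hn i j hj.1 hj.2.1 hj.2.2.1 hj.2.2.2]
    rfl
  rw [← Finset.sum_subset (Finset.subset_univ ({c1,c2,c3,c4} : Finset (Fin n)))
      (fun j _ hj => key j hj)]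
  rw [Finset.sum_insert (by simp [d12, d13, d14]),
      Finset.sum_insert (by simp [d23, d24]),
      Finset.sum_pair d34]
  rw [val1 hn i c1 (by rw [hc1]), val2 hn i c2 (by rw [hc2]),
      val3 hn i c3 (by rw [hc3]), val4 hn i c4 (by rw [hc4])]
  simp only [Option.getD_some]
  omega

private lemma condk (hn : 4 ≤ n) {c : ℕ} (hc : c < n) {k : ℕ} (h1 : 1 ≤ k)
    (h2 : k ≤ 4) : c = ((c + n - k) % n + k) % n := by
  have hn0 : 0 < n := by omega
  have g := modf2 (n:=n) hn0 (c+n-k) (by omega)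
  have e := modf2 (n:=n) hn0 ((c+n-k)%n + k) (by omega)
  interval_cases k <;> omega

private lemma dkj (hn : 4 ≤ n) {c : ℕ} (hc : c < n) {j k : ℕ} (h0 : 1 ≤ j) (h1 : j < k)
    (h2 : k ≤ 4) : (c+n-j)%n ≠ (c+n-k)%n := by
  have hn0 : 0 < n := by omega
  have g := modf2 (n:=n) hn0 (c+n-j) (by omega)
  have e := modf2 (n:=n) hn0 (c+n-k) (by omega)
  have hj : j ≤ 3 := by omega
  interval_cases j <;> interval_cases k <;> omega

private lemma keyk (hn : 4 ≤ n) {c i : ℕ} (hc : c < n) (hi : i < n) {k : ℕ}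
    (h1 : 1 ≤ k) (h2 : k ≤ 4) (h : i ≠ (c+n-k)%n) : c ≠ (i+k)%n := by
  have hn0 : 0 < n := by omega
  have g := modf2 (n:=n) hn0 (c+n-k) (by omega)
  have e := modf2 (n:=n) hn0 (i+k) (by omega)
  interval_cases k <;> omega

private lemma shiftk (hn : 4 ≤ n) {c : ℕ} (hc : c < n) {k j : ℕ} (h1 : j ≤ k)
    (h2 : k ≤ 4) (h3 : 1 ≤ j) : ((c+n-k)%n + (k-j))%n = (c+n-j)%n := by
  have hn0 : 0 < n := by omega
  have g := modf2 (n:=n) hn0 (c+n-k) (by omega)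
  have g' := modf2 (n:=n) hn0 (c+n-j) (by omega)
  have e := modf2 (n:=n) hn0 ((c+n-k)%n + (k-j)) (by omega)
  have hj : j ≤ 4 := by omega
  interval_cases j <;> interval_cases k <;> omega

private lemma colSum (hn : 4 ≤ n) (c : Fin n) :
    ∑ i, (fourDiagArray n i c).getD 0 = 8*n - 2 := by
  have hcl := c.isLt
  have hn0 : 0 < n := by omega
  have g1 := modf2 (n:=n) hn0 ((c:ℕ)+n-1) (by omega)
  have g2 := modf2 (n:=n) hn0 ((c:ℕ)+n-2) (by omega)
  have g3 := modf2 (n:=n) hn0 ((c:ℕ)+n-3) (by omega)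
  have g4 := modf2 (n:=n) hn0 ((c:ℕ)+n-4) (by omega)
  have key : ∀ i : Fin n,
      i ∉ ({⟨((c:ℕ)+n-1) % n, g1.1⟩, ⟨((c:ℕ)+n-2) % n, g2.1⟩,
            ⟨((c:ℕ)+n-3) % n, g3.1⟩, ⟨((c:ℕ)+n-4) % n, g4.1⟩} : Finset (Fin n)) →
      (fourDiagArray n i c).getD 0 = 0 := by
    intro i hi
    simp only [Finset.mem_insert, Finset.mem_singleton, not_or, Fin.ext_iff] at hi
    rw [val0 hn i c (keyk hn hcl i.isLt (by norm_num) (by norm_num) hi.1)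
      (keyk hn hcl i.isLt (by norm_num) (by norm_num) hi.2.1)
      (keyk hn hcl i.isLt (by norm_num) (by norm_num) hi.2.2.1)
      (keyk hn hcl i.isLt (by norm_num) (by norm_num) hi.2.2.2)]
    rfl
  rw [← Finset.sum_subset (Finset.subset_univ _) (fun i _ hi => key i hi)]
  have d12 := dkj (c:=(c:ℕ)) hn hcl (by norm_num) (j:=1) (k:=2) (by norm_num) (by norm_num)
  have d13 := dkj (c:=(c:ℕ)) hn hcl (by norm_num) (j:=1) (k:=3) (by norm_num) (by norm_num)
  have d14 := dkj (c:=(c:ℕ)) hn hcl (by norm_num) (j:=1) (k:=4) (by norm_num) (by norm_num)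
  have d23 := dkj (c:=(c:ℕ)) hn hcl (by norm_num) (j:=2) (k:=3) (by norm_num) (by norm_num)
  have d24 := dkj (c:=(c:ℕ)) hn hcl (by norm_num) (j:=2) (k:=4) (by norm_num) (by norm_num)
  have d34 := dkj (c:=(c:ℕ)) hn hcl (by norm_num) (j:=3) (k:=4) (by norm_num) (by norm_num)
  rw [Finset.sum_insert (by simp only [Finset.mem_insert, Finset.mem_singleton,
        Fin.mk.injEq, not_or]; exact ⟨d12, d13, d14⟩),
      Finset.sum_insert (by simp only [Finset.mem_insert, Finset.mem_singleton,
        Fin.mk.injEq, not_or]; exact ⟨d23, d24⟩),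
      Finset.sum_pair (by simp only [ne_eq, Fin.mk.injEq]; exact d34)]
  rw [val1 hn ⟨((c:ℕ)+n-1) % n, g1.1⟩ c (condk hn hcl (by norm_num) (by norm_num)),
      val2 hn ⟨((c:ℕ)+n-2) % n, g2.1⟩ c (condk hn hcl (by norm_num) (by norm_num)),
      val3 hn ⟨((c:ℕ)+n-3) % n, g3.1⟩ c (condk hn hcl (by norm_num) (by norm_num)),
      val4 hn ⟨((c:ℕ)+n-4) % n, g4.1⟩ c (condk hn hcl (by norm_num) (by norm_num))]
  simp only [Option.getD_some]
  have s3 : (((c:ℕ)+n-3)%n + 2)%n = ((c:ℕ)+n-1)%n :=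
    shiftk hn hcl (k:=3) (j:=1) (by norm_num) (by norm_num) (by norm_num)
  have s4 : (((c:ℕ)+n-4)%n + 2)%n = ((c:ℕ)+n-2)%n :=
    shiftk hn hcl (k:=4) (j:=2) (by norm_num) (by norm_num) (by norm_num)
  rw [s3, s4]
  omega

end

theorem fourDiagArray_magic (n : ℕ) (hn : 4 ≤ n) :
    (∀ e < 4 * n, ∃! p : Fin n × Fin n, fourDiagArray n p.1 p.2 = some e) ∧
    (∀ i : Fin n, ∑ j, (fourDiagArray n i j).getD 0 = 8 * n - 2) ∧
    (∀ j : Fin n, ∑ i, (fourDiagArray n i j).getD 0 = 8 * n - 2) :=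
  ⟨fun e he => exu hn e he, fun i => rowSum hn i, fun j => colSum hn j⟩
end

section
/- There is no k-diagonal magic square of order n when k = 1 and n > 1, or when k = 2. -/
private lemma cancel_mod {n c i i' : ℕ} (hi : i < n) (hi' : i' < n)
    (h : (i' + c) % n = (i + c) % n) : i' = i := by
  have h2 : i' % n = i % n := Nat.ModEq.add_right_cancel' c h
  rwa [Nat.mod_eq_of_lt hi', Nat.mod_eq_of_lt hi] at h2

theorem no_diagonal_magic_k_one_two (n k : ℕ)
    (h : (k = 1 ∧ 1 < n) ∨ (k = 2 ∧ 1 ≤ n)) :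
    ¬ ∃ M : Fin n → Fin n → Option ℕ, IsDiagonalMagic n k M := by
  rintro ⟨M, ⟨⟨S, h1, h2, hrow, hcol, hrsum, hcsum⟩, d, hdiag⟩⟩
  rcases h with ⟨hk, hn⟩ | ⟨hk, hn⟩
  · -- k = 1, n > 1
    subst hk
    -- a row with a filled cell has row sum equal to that cell's value
    have key : ∀ (p : Fin n × Fin n) (v : ℕ), M p.1 p.2 = some v → S = v := by
      rintro ⟨i, j⟩ v hv
      have hmem : j ∈ Finset.univ.filter fun j' => (M i j').isSome := by
        simp [hv]
      obtain ⟨a, ha⟩ := Finset.card_eq_one.mp (hrow i)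
      rw [ha, Finset.mem_singleton] at hmem
      subst hmem
      have := hrsum i
      rw [Finset.sum_eq_single j (fun b _ hb => by
        have : b ∉ Finset.univ.filter fun j' => (M i j').isSome := by
          rw [ha]; simpa using hb
        have : M i b = none := by
          simpa [Option.not_isSome_iff_eq_none] using this
        simp [this]) (by simp)] at this
      rw [hv] at this
      simpa using this.symm
    obtain ⟨p, hp, _⟩ := h1 0 (by omega)
    obtain ⟨q, hq, _⟩ := h1 1 (by omega)
    have := key p 0 hp
    have := key q 1 hq
    omega
  · -- k = 2
    subst hk
    rcases Nat.lt_or_ge n 2 with hn2 | hn2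
    · -- n = 1 : impossible to have 2 filled cells in a row
      interval_cases n
      have := hrow 0
      have hle : (Finset.univ.filter fun j => (M 0 j).isSome).card ≤ 1 := by
        have := Finset.card_le_univ (Finset.univ.filter fun j => (M 0 j).isSome)
        simpa using this
      omega
    · -- n ≥ 2
      have npos : 0 < n := by omega
      set i0 : Fin n := ⟨0, npos⟩ with hi0
      set i1 : Fin n := ⟨1, hn2⟩ with hi1
      have hne01 : i0 ≠ i1 := by
        intro hh
        have := congrArg Fin.val hh
        simp [hi0, hi1] at this
      set j0 : Fin n → Fin n := fun i => ⟨((i : ℕ) + d) % n, Nat.mod_lt _ npos⟩ with hj0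
      set j1 : Fin n → Fin n := fun i => ⟨((i : ℕ) + d + 1) % n, Nat.mod_lt _ npos⟩ with hj1
      have hne : ∀ i, j0 i ≠ j1 i := by
        intro i hij
        have h3 : ((i : ℕ) + d) % n = ((i : ℕ) + d + 1) % n := congrArg Fin.val hij
        have h4 : (0 + ((i : ℕ) + d)) % n = (1 + ((i : ℕ) + d)) % n := by
          rw [Nat.zero_add, Nat.add_comm 1]; exact h3
        have := cancel_mod (by omega : (1:ℕ) < n) (by omega : (0:ℕ) < n) h4
        omega
      have hdiag' : ∀ i j, (M i j).isSome → j = j0 i ∨ j = j1 i := by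
        intro i j hij
        obtain ⟨t, ht, hjt⟩ := hdiag i j hij
        interval_cases t
        · left; exact Fin.ext (by simpa using hjt)
        · right; exact Fin.ext (by simpa using hjt)
      -- row filter is exactly the pair
      have hfilter : ∀ i, (Finset.univ.filter fun j => (M i j).isSome) = {j0 i, j1 i} := by
        intro i
        refine Finset.eq_of_subset_of_card_le ?_ ?_
        · intro j hj
          rw [Finset.mem_filter] at hj
          rcases hdiag' i j hj.2 with h | h <;> simp [h]
        · rw [Finset.card_pair (hne i), hrow i]
      have hfill0 : ∀ i, (M i (j0 i)).isSome := by
        intro i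
        have : j0 i ∈ Finset.univ.filter fun j => (M i j).isSome := by
          rw [hfilter i]; simp
        simpa using (Finset.mem_filter.mp this).2
      have hfill1 : ∀ i, (M i (j1 i)).isSome := by
        intro i
        have : j1 i ∈ Finset.univ.filter fun j => (M i j).isSome := by
          rw [hfilter i]; simp
        simpa using (Finset.mem_filter.mp this).2
      -- row sums
      have hrow2 : ∀ i, (M i (j0 i)).getD 0 + (M i (j1 i)).getD 0 = S := by
        intro i
        have hz : ∀ j ∈ Finset.univ, j ∉ ({j0 i, j1 i} : Finset (Fin n)) →
            (M i j).getD 0 = 0 := by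
          intro j _ hj
          have : j ∉ Finset.univ.filter fun j' => (M i j').isSome := by
            rw [hfilter i]; exact hj
          have : M i j = none := by
            simpa [Option.not_isSome_iff_eq_none] using this
          simp [this]
        have := Finset.sum_subset (Finset.subset_univ ({j0 i, j1 i} : Finset (Fin n))) hz
        rw [hrsum i] at this
        rw [← this, Finset.sum_pair (hne i)]
      -- the special column : j1 i0
      set c : Fin n := j1 i0 with hc
      have hcval : (c : ℕ) = (d + 1) % n := by simp [hc, hj1, hi0]
      -- j0 i1 = c
      have hjc : j0 i1 = c := by
        apply Fin.ext
        show ((i1 : ℕ) + d) % n = (c : ℕ)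
        rw [hcval]
        have hv1' : (i1 : ℕ) = 1 := rfl
        rw [hv1', Nat.add_comm]
      -- column filter for c is {i0, i1}
      have hcolfilter : (Finset.univ.filter fun i => (M i c).isSome) = {i0, i1} := by
        refine Finset.eq_of_subset_of_card_le ?_ ?_
        · intro i hi
          rw [Finset.mem_filter] at hi
          rcases hdiag' i c hi.2 with hh | hh
          · -- c = j0 i : (d+1)%n = (i+d)%n, so i = 1
            have hv : ((i : ℕ) + d) % n = (1 + d) % n := by
              have h5 : (c : ℕ) = ((i : ℕ) + d) % n := congrArg Fin.val hh
              rw [hcval] at h5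
              rw [← h5]
              rw [Nat.add_comm 1 d]
            have := cancel_mod (by omega : (1:ℕ) < n) i.isLt hv
            have : i = i1 := Fin.ext (by rw [hi1]; exact this)
            simp [this]
          · -- c = j1 i : (d+1)%n = (i+d+1)%n, so i = 0
            have hv : ((i : ℕ) + (d + 1)) % n = (0 + (d + 1)) % n := by
              have h5 : (c : ℕ) = ((i : ℕ) + d + 1) % n := congrArg Fin.val hh
              rw [hcval] at h5
              rw [Nat.zero_add, ← Nat.add_assoc]
              exact h5.symm
            have := cancel_mod npos i.isLt hv
            have : i = i0 := Fin.ext (by rw [hi0]; exact this)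
            simp [this]
        · rw [Finset.card_pair hne01, hcol c]
      -- column sum for c
      have hcol2 : (M i0 (j1 i0)).getD 0 + (M i1 (j0 i1)).getD 0 = S := by
        have hz : ∀ i ∈ Finset.univ, i ∉ ({i0, i1} : Finset (Fin n)) →
            (M i c).getD 0 = 0 := by
          intro i _ hi
          have : i ∉ Finset.univ.filter fun i' => (M i' c).isSome := by
            rw [hcolfilter]; exact hi
          have : M i c = none := by
            simpa [Option.not_isSome_iff_eq_none] using this
          simp [this]
        have := Finset.sum_subset (Finset.subset_univ ({i0, i1} : Finset (Fin n))) hz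
        rw [hcsum c] at this
        rw [Finset.sum_pair hne01] at this
        rw [← hc, hjc]
        exact this
      -- now B i0 = B i1
      have hr0 := hrow2 i0
      have hr1 := hrow2 i1
      have hbb : (M i0 (j1 i0)).getD 0 = (M i1 (j1 i1)).getD 0 := by omega
      obtain ⟨v0, hv0⟩ := Option.isSome_iff_exists.mp (hfill1 i0)
      obtain ⟨v1, hv1⟩ := Option.isSome_iff_exists.mp (hfill1 i1)
      rw [hv0, hv1] at hbb
      simp at hbb
      subst hbb
      have hvlt : v0 < 2 * n := h2 i0 (j1 i0) v0 hv0
      obtain ⟨p, _, hpu⟩ := h1 v0 hvlt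
      have e0 := hpu (i0, j1 i0) hv0
      have e1 := hpu (i1, j1 i1) hv1
      have : (i0, j1 i0) = (i1, j1 i1) := by rw [e0, e1]
      exact hne01 (congrArg Prod.fst this)
end
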